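/- arXiv:2108.03303 — 4 statements merged into one kernel-verified Lean document; each statement's English description precedes it below -/
import Mathlib

section
/- Let K = WithTop (ℕ ×ₗ ℕ) and L₂ = K × Bool with the componentwise lattice order, and let Γ be the set of non-generators of L₂. Then the intersection Φ of all maximal proper complete sublattices of L₂ satisfies Φ = ⟨Γ⟩ = Γ ∪ {(⊤, false)}, where ⟨Γ⟩ is the complete sublattice generated by Γ. -/
/-- A complete sublattice of a complete lattice: a subset closed under arbitrary
infima and suprema computed in `L` (including the empty ones, so it contains `⊤` and `⊥`). -/
def IsCompleteSublattice {L : Type*} [CompleteLattice L] (S : Set L) : Prop :=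
  (∀ Y : Set L, Y ⊆ S → sInf Y ∈ S) ∧ (∀ Y : Set L, Y ⊆ S → sSup Y ∈ S)

/-- The complete sublattice generated by `X`: the intersection of all complete
sublattices containing `X`. -/
def latGen {L : Type*} [CompleteLattice L] (X : Set L) : Set L :=
  ⋂₀ {S : Set L | IsCompleteSublattice S ∧ X ⊆ S}

/-- `a` is a non-generator (w.r.t. complete-sublattice generation). -/
def IsLatNonGenerator {L : Type*} [CompleteLattice L] (a : L) : Prop :=
  ∀ X : Set L, latGen (X ∪ {a}) = Set.univ → latGen X = Set.univ

/-- A maximal proper complete sublattice. -/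
def IsMaxProperSublattice {L : Type*} [CompleteLattice L] (P : Set L) : Prop :=
  IsCompleteSublattice P ∧ P ≠ Set.univ ∧
    ∀ Q : Set L, IsCompleteSublattice Q → Q ≠ Set.univ → P ⊆ Q → P = Q

/-- `ℕ ×ₗ ℕ` is a well-order, hence conditionally complete with bottom;
this makes `WithTop (ℕ ×ₗ ℕ)` a complete lattice of order type `ω² + 1`. -/
noncomputable instance : ConditionallyCompleteLinearOrderBot (ℕ ×ₗ ℕ) :=
  WellFoundedLT.conditionallyCompleteLinearOrderBot _

set_option linter.unusedVariables false

noncomputable abbrev KK := WithTop (ℕ ×ₗ ℕ)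
noncomputable abbrev LL := KK × Bool
noncomputable def sEl (m n : ℕ) : KK := ((toLex (m, n) : ℕ ×ₗ ℕ) : KK)

lemma e0_le (k : KK) : sEl 0 0 ≤ k := by
  cases k with
  | none => exact le_top
  | some x =>
    refine WithTop.coe_le_coe.2 ?_
    rw [← toLex_ofLex x, Prod.Lex.le_iff]
    simp only [ofLex_toLex]
    omega

lemma sEl_le_iff (m n a b : ℕ) : sEl m n ≤ sEl a b ↔ (m < a ∨ (m = a ∧ n ≤ b)) := by
  rw [show (sEl m n ≤ sEl a b) ↔ (toLex (m,n) : ℕ ×ₗ ℕ) ≤ toLex (a,b) from WithTop.coe_le_coe,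
    Prod.Lex.le_iff]
  simp only [ofLex_toLex]

lemma sEl_lt_iff (m n a b : ℕ) : sEl m n < sEl a b ↔ (m < a ∨ (m = a ∧ n < b)) := by
  rw [show (sEl m n < sEl a b) ↔ (toLex (m,n) : ℕ ×ₗ ℕ) < toLex (a,b) from WithTop.coe_lt_coe,
    Prod.Lex.lt_iff]
  simp only [ofLex_toLex]

lemma sEl_inj {m n a b : ℕ} (h : sEl m n = sEl a b) : m = a ∧ n = b := by
  have h2 := WithTop.coe_inj.1 h
  have h3 : (ofLex (toLex (m,n)) : ℕ × ℕ) = ofLex (toLex (a,b)) := by rw [h2]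
  simpa [Prod.ext_iff] using h3

lemma sEl_ne_top (m n : ℕ) : sEl m n ≠ ⊤ := WithTop.coe_ne_top

lemma kk_cases (k : KK) : k = ⊤ ∨ (∃ m, k = sEl m 0) ∨ ∃ m n, k = sEl m (n+1) := by
  cases k with
  | none => exact Or.inl rfl
  | some x =>
    rcases h : (ofLex x) with ⟨a,b⟩
    have hx : x = toLex (a,b) := by rw [← h]; rfl
    cases b with
    | zero => exact Or.inr (Or.inl ⟨a, by rw [hx]; rfl⟩)
    | succ b => exact Or.inr (Or.inr ⟨a, b, by rw [hx]; rfl⟩)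

lemma kk_sInf_mem {A : Set KK} (h : A.Nonempty) : sInf A ∈ A := by
  obtain ⟨m, hm, hmin⟩ := (wellFounded_lt (α := KK)).has_min A h
  have : sInf A = m := le_antisymm (sInf_le hm)
    (le_sInf fun b hb => not_lt.1 (hmin b hb))
  rw [this]; exact hm

lemma lt_succ_iff' {k : KK} {m n : ℕ} : k < sEl m (n+1) ↔ k ≤ sEl m n := by
  cases k with
  | none =>
    constructor
    · intro h; exact absurd h not_top_lt
    · intro h; exact absurd (top_le_iff.1 h) (sEl_ne_top m n)
  | some x =>
    rcases h : (ofLex x) with ⟨a,b⟩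
    have hx : (some x : KK) = sEl a b := by
      show (x : KK) = _
      rw [show x = toLex (a,b) from by rw [← h]; rfl]; rfl
    rw [hx, sEl_lt_iff, sEl_le_iff]; omega

lemma sSup_succ_mem {A : Set KK} {m n : ℕ} (h : sSup A = sEl m (n+1)) :
    sEl m (n+1) ∈ A := by
  by_contra hc
  have hb : ∀ a ∈ A, a ≤ sEl m n := by
    intro a ha
    have h1 : a ≤ sEl m (n+1) := h ▸ le_sSup ha
    have h2 : a ≠ sEl m (n+1) := fun e => hc (e ▸ ha)
    exact lt_succ_iff'.1 (lt_of_le_of_ne h1 h2)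
  have h4 := sSup_le hb
  rw [h] at h4
  exact absurd h4 (by rw [sEl_le_iff]; omega)

-- set of non-successors
def NS : Set KK := {k | k = ⊤ ∨ ∃ m, k = sEl m 0}

lemma sSup_NS {A : Set KK} (hA : A ⊆ NS) : sSup A ∈ NS := by
  rcases kk_cases (sSup A) with h | h | ⟨m, n, h⟩
  · exact Or.inl h
  · exact Or.inr h
  · have := hA (sSup_succ_mem h)
    rw [h]
    exact this

lemma bool_sSup_true {B : Set Bool} : sSup B = true ↔ true ∈ B := by
  constructor
  · intro h
    by_contra hc
    have : sSup B ≤ false := sSup_le (fun b hb => by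
      cases b with
      | true => exact absurd hb hc
      | false => exact le_rfl)
    rw [h] at this; exact absurd this (by decide)
  · intro h
    exact le_antisymm (by exact le_top) (le_sSup h)

lemma bool_sInf_false {B : Set Bool} : sInf B = false ↔ false ∈ B := by
  constructor
  · intro h
    by_contra hc
    have : (true : Bool) ≤ sInf B := le_sInf (fun b hb => by
      cases b with
      | false => exact absurd hb hc
      | true => exact le_rfl)
    rw [h] at this; exact absurd this (by decide)
  · intro h
    exact le_antisymm (sInf_le h) (by exact bot_le)

lemma sSup_limit (m : ℕ) : sSup {k : KK | ∃ n, k = sEl m n} = sEl (m+1) 0 := by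
  apply le_antisymm
  · exact sSup_le (fun k ⟨n, hk⟩ => hk ▸ (by rw [sEl_le_iff]; omega))
  · by_contra hc
    have hlt : sSup {k : KK | ∃ n, k = sEl m n} < sEl (m+1) 0 := lt_of_not_ge hc
    rcases kk_cases (sSup {k : KK | ∃ n, k = sEl m n}) with h | ⟨a, h⟩ | ⟨a, b, h⟩
    · rw [h] at hlt; exact absurd hlt not_top_lt
    · rw [h] at hlt
      rw [sEl_lt_iff] at hlt
      have h0 : sEl m 0 ≤ sEl a 0 := h ▸ le_sSup ⟨0, rfl⟩
      rw [sEl_le_iff] at h0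
      have h1 : sEl m 1 ≤ sEl a 0 := h ▸ le_sSup ⟨1, rfl⟩
      rw [sEl_le_iff] at h1
      omega
    · rw [h] at hlt
      rw [sEl_lt_iff] at hlt
      have h0 : sEl m (b+2) ≤ sEl a (b+1) := h ▸ le_sSup ⟨b+2, rfl⟩
      rw [sEl_le_iff] at h0
      have h1 : sEl m 0 ≤ sEl a (b+1) := h ▸ le_sSup ⟨0, rfl⟩
      rw [sEl_le_iff] at h1
      omega

lemma sSup_unbdd (m' : ℕ) : sSup {k : KK | ∃ m, k = sEl m m'} = ⊤ := by
  rw [sSup_eq_top]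
  intro b hb
  rcases kk_cases b with h | ⟨a, h⟩ | ⟨a, c, h⟩
  · exact absurd h (ne_top_of_lt hb)
  · exact ⟨sEl (a+1) m', ⟨a+1, rfl⟩, h ▸ (by rw [sEl_lt_iff]; omega)⟩
  · exact ⟨sEl (a+1) m', ⟨a+1, rfl⟩, h ▸ (by rw [sEl_lt_iff]; omega)⟩

lemma T_eq_univ {T : Set KK} (hsucc : ∀ m n, sEl m (n+1) ∈ T) (h0 : sEl 0 0 ∈ T)
    (hsup : ∀ A : Set KK, A ⊆ T → A.Nonempty → sSup A ∈ T) : T = Set.univ := by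
  have hmn : ∀ m n, sEl m n ∈ T := by
    intro m
    induction m with
    | zero => intro n; cases n with
      | zero => exact h0
      | succ n => exact hsucc 0 n
    | succ m ih =>
      intro n
      cases n with
      | succ n => exact hsucc (m+1) n
      | zero =>
        have := hsup {k : KK | ∃ n, k = sEl m n} (fun k ⟨n, hk⟩ => hk ▸ ih n) ⟨sEl m 0, 0, rfl⟩
        rwa [sSup_limit] at this
  have htop : (⊤ : KK) ∈ T := by
    have := hsup {k : KK | ∃ m, k = sEl m 0} (fun k ⟨a, hk⟩ => hk ▸ hmn a 0) ⟨sEl 0 0, 0, rfl⟩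
    rwa [sSup_unbdd] at this
  ext k
  simp only [Set.mem_univ, iff_true]
  rcases kk_cases k with h | ⟨a, h⟩ | ⟨a, b, h⟩
  · exact h ▸ htop
  · exact h ▸ hmn a 0
  · exact h ▸ hmn a (b+1)

section generic
variable {L : Type*} [CompleteLattice L]

lemma isSub_univ : IsCompleteSublattice (Set.univ : Set L) :=
  ⟨fun _ _ => trivial, fun _ _ => trivial⟩

lemma latGen_isSub (X : Set L) : IsCompleteSublattice (latGen X) := by
  constructor
  · intro Y hY
    exact fun S hS => hS.1.1 Y (fun y hy => hY hy S hS)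
  · intro Y hY
    exact fun S hS => hS.1.2 Y (fun y hy => hY hy S hS)

lemma subset_latGen (X : Set L) : X ⊆ latGen X :=
  fun x hx S hS => hS.2 hx

lemma latGen_subset {X S : Set L} (hS : IsCompleteSublattice S) (hXS : X ⊆ S) :
    latGen X ⊆ S := fun x hx => hx S ⟨hS, hXS⟩

lemma latGen_self {S : Set L} (hS : IsCompleteSublattice S) : latGen S = S :=
  le_antisymm (latGen_subset hS le_rfl) (subset_latGen S)

lemma sup_mem {S : Set L} (hS : IsCompleteSublattice S) {a b : L}
    (ha : a ∈ S) (hb : b ∈ S) : a ⊔ b ∈ S := by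
  have := hS.2 {a, b} (by rintro x (rfl | rfl) <;> assumption)
  rwa [sSup_pair] at this

lemma inf_mem {S : Set L} (hS : IsCompleteSublattice S) {a b : L}
    (ha : a ∈ S) (hb : b ∈ S) : a ⊓ b ∈ S := by
  have := hS.1 {a, b} (by rintro x (rfl | rfl) <;> assumption)
  rwa [sInf_pair] at this

lemma top_mem {S : Set L} (hS : IsCompleteSublattice S) : (⊤ : L) ∈ S := by
  have := hS.1 ∅ (Set.empty_subset S); rwa [sInf_empty] at this

lemma bot_mem {S : Set L} (hS : IsCompleteSublattice S) : (⊥ : L) ∈ S := by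
  have := hS.2 ∅ (Set.empty_subset S); rwa [sSup_empty] at this

end generic

lemma bool_sup_true (b : Bool) : b ⊔ true = true :=
  le_antisymm (show b ⊔ true ≤ (⊤ : Bool) from le_top) le_sup_right

lemma bool_inf_false (b : Bool) : b ⊓ false = false :=
  le_antisymm inf_le_right (show (⊥ : Bool) ≤ b ⊓ false from bot_le)

lemma bot_eq_e0 : (⊥ : KK) = sEl 0 0 := le_antisymm bot_le (e0_le ⊥)

lemma LL_top : (⊤ : LL) = (⊤, true) := rfl
lemma LL_bot : (⊥ : LL) = (sEl 0 0, false) := by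
  rw [show (⊥ : LL) = ((⊥ : KK), (⊥ : Bool)) from rfl, bot_eq_e0]; rfl

-- component lemmas
lemma memT_sSup {S : Set LL} (hS : IsCompleteSublattice S) {A : Set KK}
    (hA : A.Nonempty) (h : ∀ k ∈ A, (k, true) ∈ S) : (sSup A, true) ∈ S := by
  have hmem := hS.2 ((fun k => ((k, true) : LL)) '' A)
    (by rintro p ⟨k, hk, rfl⟩; exact h k hk)
  have he : sSup ((fun k => ((k, true) : LL)) '' A) = (sSup A, true) := by
    apply Prod.ext
    · rw [Prod.fst_sSup, Set.image_image]; simp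
    · rw [Prod.snd_sSup, Set.image_image]
      have : (fun x => ((x, true) : LL).2) '' A = {true} := by
        rw [Set.eq_singleton_iff_nonempty_unique_mem]
        exact ⟨hA.image _, by rintro b ⟨k, _, rfl⟩; rfl⟩
      rw [this, sSup_singleton]
  rwa [he] at hmem

lemma memF_sSup {S : Set LL} (hS : IsCompleteSublattice S) {A : Set KK}
    (hA : A.Nonempty) (h : ∀ k ∈ A, (k, false) ∈ S) : (sSup A, false) ∈ S := by
  have hmem := hS.2 ((fun k => ((k, false) : LL)) '' A)
    (by rintro p ⟨k, hk, rfl⟩; exact h k hk)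
  have he : sSup ((fun k => ((k, false) : LL)) '' A) = (sSup A, false) := by
    apply Prod.ext
    · rw [Prod.fst_sSup, Set.image_image]; simp
    · rw [Prod.snd_sSup, Set.image_image]
      have : (fun x => ((x, false) : LL).2) '' A = {false} := by
        rw [Set.eq_singleton_iff_nonempty_unique_mem]
        exact ⟨hA.image _, by rintro b ⟨k, _, rfl⟩; rfl⟩
      rw [this, sSup_singleton]
  rwa [he] at hmem

lemma mix_sup {S : Set LL} (hS : IsCompleteSublattice S) {k k' : KK}
    (h1 : (k, false) ∈ S) (h2 : (k', true) ∈ S) : (k ⊔ k', true) ∈ S := by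
  have := sup_mem hS h1 h2
  have he : ((k, false) : LL) ⊔ (k', true) = (k ⊔ k', true) := by
    apply Prod.ext
    · rw [Prod.fst_sup]
    · rw [Prod.snd_sup]; exact bool_sup_true false
  rwa [he] at this

lemma mix_inf {S : Set LL} (hS : IsCompleteSublattice S) {k k' : KK}
    (h1 : (k, true) ∈ S) (h2 : (k', false) ∈ S) : (k ⊓ k', false) ∈ S := by
  have := inf_mem hS h1 h2
  have he : ((k, true) : LL) ⊓ (k', false) = (k ⊓ k', false) := by
    apply Prod.ext
    · rw [Prod.fst_inf]
    · rw [Prod.snd_inf]; exact bool_inf_false true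
  rwa [he] at this

def S1 : Set LL := {p | p ≠ (sEl 0 0, true)}
def Sg (m n : ℕ) : Set LL := {p | p.1 ≠ sEl m (n+1)}
def Sc (c : KK) : Set LL := {p | p.2 = true ∨ p.1 ≤ c}
def Gt : Set LL := {p | p.1 ∈ NS ∧ p ≠ (sEl 0 0, true)}

-- helper: a sSup equal to (e0, true) forces membership
lemma ssup_e0t {Y : Set LL} (h : sSup Y = (sEl 0 0, true)) : (sEl 0 0, true) ∈ Y := by
  have hs : sSup (Prod.snd '' Y) = true := by rw [← Prod.snd_sSup, h]
  obtain ⟨y, hy, hy2⟩ := bool_sSup_true.1 hs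
  have h1 : y.1 ≤ sEl 0 0 := by
    have := le_sSup hy
    rw [h] at this
    exact this.1
  have h1' : y.1 = sEl 0 0 := le_antisymm h1 (e0_le _)
  have : y = (sEl 0 0, true) := Prod.ext h1' hy2
  rwa [this] at hy

lemma sinf_e0t {Y : Set LL} (h : sInf Y = (sEl 0 0, true)) : (sEl 0 0, true) ∈ Y := by
  rcases Set.eq_empty_or_nonempty Y with rfl | hne
  · rw [sInf_empty, LL_top] at h
    exact absurd (congrArg Prod.fst h) (by simp [(sEl_ne_top 0 0).symm])
  · have hf : sInf (Prod.fst '' Y) = sEl 0 0 := by rw [← Prod.fst_sInf, h]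
    obtain ⟨y, hy, hy1⟩ := (hf ▸ kk_sInf_mem (hne.image Prod.fst) : _ ∈ Prod.fst '' Y)
    have hs : ∀ z ∈ Y, z.2 = true := by
      intro z hz
      by_contra hzc
      have : z.2 = false := by revert hzc; cases z.2 <;> simp
      have hfm : sInf (Prod.snd '' Y) = false :=
        bool_sInf_false.2 ⟨z, hz, this⟩
      have : (sInf Y).2 = true := by rw [h]
      rw [Prod.snd_sInf, hfm] at this
      exact absurd this (by simp)
    have : y = (sEl 0 0, true) := Prod.ext hy1 (hs y hy)
    rwa [this] at hy

lemma isSub_S1 : IsCompleteSublattice S1 := by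
  constructor
  · intro Y hY
    intro hc
    exact hY (sinf_e0t hc) rfl
  · intro Y hY
    intro hc
    exact hY (ssup_e0t hc) rfl

lemma max_S1 : IsMaxProperSublattice S1 := by
  refine ⟨isSub_S1, ?_, ?_⟩
  · intro h
    have : (sEl 0 0, true) ∈ S1 := h ▸ trivial
    exact this rfl
  · intro Q hQ hQne hsub
    by_contra hne
    have hq : (sEl 0 0, true) ∈ Q := by
      rcases Set.not_subset.1 (fun hQS : Q ⊆ S1 => hne (le_antisymm hsub hQS)) with ⟨q, hq, hq1⟩
      have : q = (sEl 0 0, true) := not_not.1 hq1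
      rwa [this] at hq
    apply hQne
    ext p
    simp only [Set.mem_univ, iff_true]
    by_cases hp : p = (sEl 0 0, true)
    · rwa [hp]
    · exact hsub hp

lemma isSub_Sg (m n : ℕ) : IsCompleteSublattice (Sg m n) := by
  constructor
  · intro Y hY hc
    rcases Set.eq_empty_or_nonempty Y with rfl | hne
    · rw [sInf_empty, Prod.fst_top] at hc
      exact sEl_ne_top m (n+1) hc.symm
    · rw [Prod.fst_sInf] at hc
      obtain ⟨y, hy, hy1⟩ := (hc ▸ kk_sInf_mem (hne.image Prod.fst) : _ ∈ Prod.fst '' Y)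
      exact hY hy hy1
  · intro Y hY hc
    rw [Prod.fst_sSup] at hc
    have := sSup_succ_mem hc
    obtain ⟨y, hy, hy1⟩ := this
    exact hY hy hy1

lemma max_Sg (m n : ℕ) : IsMaxProperSublattice (Sg m n) := by
  refine ⟨isSub_Sg m n, ?_, ?_⟩
  · intro h
    have : ((sEl m (n+1), true) : LL) ∈ Sg m n := h ▸ trivial
    exact this rfl
  · intro Q hQ hQne hsub
    by_contra hne
    obtain ⟨q, hq, hq1⟩ := Set.not_subset.1
      (fun hQS : Q ⊆ Sg m n => hne (le_antisymm hsub hQS))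
    have hq1' : q.1 = sEl m (n+1) := not_not.1 hq1
    -- both (γ, true) and (γ, false) are in Q
    have htop : ((⊤ : KK), false) ∈ Q := hsub (sEl_ne_top m (n+1)).symm
    have he0 : ((sEl 0 0, true) : LL) ∈ Q := by
      refine hsub ?_
      show sEl 0 0 ≠ sEl m (n+1)
      intro h; exact absurd (sEl_inj h).2 (by omega)
    have hqt : ((sEl m (n+1), true) : LL) ∈ Q ∧ ((sEl m (n+1), false) : LL) ∈ Q := by
      rcases hb : q.2 with hfalse | htrue
      · -- q = (γ, false)
        have hqQ : ((sEl m (n+1), false) : LL) ∈ Q := by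
          have : q = (sEl m (n+1), false) := Prod.ext hq1' hb
          rwa [this] at hq
        have := mix_sup hQ hqQ he0
        rw [sup_eq_left.2 (e0_le _)] at this
        exact ⟨this, hqQ⟩
      · have hqQ : ((sEl m (n+1), true) : LL) ∈ Q := by
          have : q = (sEl m (n+1), true) := Prod.ext hq1' hb
          rwa [this] at hq
        have := mix_inf hQ hqQ htop
        rw [inf_top_eq] at this
        exact ⟨hqQ, this⟩
    apply hQne
    ext p
    simp only [Set.mem_univ, iff_true]
    by_cases hp : p.1 = sEl m (n+1)
    · rcases hb : p.2 with _ | _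
      · have : p = (sEl m (n+1), false) := Prod.ext hp hb
        rw [this]; exact hqt.2
      · have : p = (sEl m (n+1), true) := Prod.ext hp hb
        rw [this]; exact hqt.1
    · exact hsub hp

lemma isSub_Sc (c : KK) : IsCompleteSublattice (Sc c) := by
  constructor
  · intro Y hY
    rcases hb : (sInf Y).2 with _ | _
    · right
      have : false ∈ Prod.snd '' Y := bool_sInf_false.1 (by rw [← Prod.snd_sInf, hb])
      obtain ⟨y, hy, hy2⟩ := this
      have hyc : y.1 ≤ c := by
        rcases hY hy with h | h
        · rw [hy2] at h; exact absurd h (by simp)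
        · exact h
      calc (sInf Y).1 = sInf (Prod.fst '' Y) := Prod.fst_sInf Y
        _ ≤ y.1 := sInf_le ⟨y, hy, rfl⟩
        _ ≤ c := hyc
    · left; exact hb
  · intro Y hY
    rcases hb : (sSup Y).2 with _ | _
    · right
      rw [Prod.fst_sSup]
      apply sSup_le
      rintro k ⟨y, hy, rfl⟩
      rcases hY hy with h | h
      · exfalso
        have : sSup (Prod.snd '' Y) = true := bool_sSup_true.2 ⟨y, hy, h⟩
        rw [← Prod.snd_sSup, hb] at this
        exact absurd this (by simp)
      · exact h
    · left; exact hb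

-- if S is a sublattice containing (e0,true) and for each successor γ one of (γ,b),
-- then S contains all (k, true)
lemma allT_of {S : Set LL} (hS : IsCompleteSublattice S)
    (h2 : ((sEl 0 0, true) : LL) ∈ S)
    (hsucc : ∀ m n, ((sEl m (n+1), true) : LL) ∈ S ∨ ((sEl m (n+1), false) : LL) ∈ S) :
    ∀ k : KK, (k, true) ∈ S := by
  have hT : {k : KK | (k, true) ∈ S} = Set.univ := by
    apply T_eq_univ
    · intro m n
      rcases hsucc m n with h | h
      · exact h
      · have := mix_sup hS h h2
        rwa [sup_eq_left.2 (e0_le _)] at this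
    · exact h2
    · intro A hA hne
      exact memT_sSup hS hne (fun k hk => hA hk)
  intro k
  exact (Set.eq_univ_iff_forall.1 hT) k

-- if additionally (⊤, false) ∈ S then S = univ
lemma univ_of_topF {S : Set LL} (hS : IsCompleteSublattice S)
    (hT : ∀ k : KK, (k, true) ∈ S) (htf : ((⊤ : KK), false) ∈ S) : S = Set.univ := by
  ext p
  simp only [Set.mem_univ, iff_true]
  rcases hb : p.2 with _ | _
  · have := mix_inf hS (hT p.1) htf
    rw [inf_top_eq] at this
    have he : p = (p.1, false) := Prod.ext rfl hb
    rwa [← he] at this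
  · have he : p = (p.1, true) := Prod.ext rfl hb
    rw [he]; exact hT p.1

lemma sSupF_mem {S : Set LL} (hS : IsCompleteSublattice S) :
    (sSup {k : KK | (k, false) ∈ S}, false) ∈ S := by
  apply memF_sSup hS
  · refine ⟨sEl 0 0, ?_⟩
    have := bot_mem hS
    rwa [LL_bot] at this
  · exact fun k hk => hk

/-- The key escape lemma: a proper complete sublattice together with an element of
`Γt` is contained in a proper complete sublattice. -/
lemma escape {S : Set LL} (hS : IsCompleteSublattice S) (hSne : S ≠ Set.univ)
    {a : LL} (ha1 : a.1 ∈ NS) (ha2 : a ≠ (sEl 0 0, true)) (ha3 : a ≠ ((⊤ : KK), false)) :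
    ∃ M : Set LL, IsCompleteSublattice M ∧ M ≠ Set.univ ∧ S ⊆ M ∧ a ∈ M := by
  by_cases h1 : ∃ m n, ((sEl m (n+1), true) : LL) ∉ S ∧ ((sEl m (n+1), false) : LL) ∉ S
  · obtain ⟨m, n, ht, hf⟩ := h1
    refine ⟨Sg m n, isSub_Sg m n, (max_Sg m n).2.1, ?_, ?_⟩
    · intro p hp
      intro hc
      rcases hb : p.2 with _ | _
      · have hpe : p = (sEl m (n+1), false) := Prod.ext hc hb
        exact hf (hpe ▸ hp)
      · have hpe : p = (sEl m (n+1), true) := Prod.ext hc hb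
        exact ht (hpe ▸ hp)
    · show a.1 ≠ sEl m (n+1)
      rcases ha1 with h | ⟨m', h⟩
      · rw [h]; exact fun hc => sEl_ne_top m (n+1) hc.symm
      · rw [h]; intro hc; exact absurd (sEl_inj hc).2 (by omega)
  · push_neg at h1
    have hsucc : ∀ m n, ((sEl m (n+1), true) : LL) ∈ S ∨ ((sEl m (n+1), false) : LL) ∈ S := by
      intro m n
      by_cases h : ((sEl m (n+1), true) : LL) ∈ S
      · exact Or.inl h
      · exact Or.inr (h1 m n h)
    by_cases h2 : ((sEl 0 0, true) : LL) ∈ S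
    · have hT := allT_of hS h2 hsucc
      rcases hb : a.2 with _ | _
      · -- a = (a.1, false)
        have ha1top : a.1 ≠ ⊤ := by
          intro hc
          exact ha3 (Prod.ext hc hb)
        have htf : ((⊤ : KK), false) ∉ S := by
          intro hc
          exact hSne (univ_of_topF hS hT hc)
        set c₀ := sSup {k : KK | (k, false) ∈ S} with hc₀
        have hc₀S : (c₀, false) ∈ S := sSupF_mem hS
        have hc₀top : c₀ ≠ ⊤ := by
          intro hc
          exact htf (by rwa [hc] at hc₀S)
        refine ⟨Sc (c₀ ⊔ a.1), isSub_Sc _, ?_, ?_, ?_⟩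
        · intro hc
          have : ((⊤ : KK), false) ∈ Sc (c₀ ⊔ a.1) := hc ▸ trivial
          rcases this with h | h
          · exact absurd h (by simp)
          · rcases (le_sup_iff.1 h) with h' | h'
            · exact hc₀top (top_le_iff.1 h')
            · exact ha1top (top_le_iff.1 h')
        · intro p hp
          rcases hpb : p.2 with _ | _
          · right
            have hpe : p = (p.1, false) := Prod.ext rfl hpb
            have : p.1 ≤ c₀ := le_sSup (show (p.1, false) ∈ S from hpe ▸ hp)
            exact le_trans this le_sup_left
          · left; exact hpb
        · exact Or.inr le_sup_right
      · refine ⟨S, hS, hSne, le_rfl, ?_⟩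
        have : a = (a.1, true) := Prod.ext rfl hb
        rw [this]; exact hT a.1
    · refine ⟨S1, isSub_S1, max_S1.2.1, ?_, ha2⟩
      intro p hp hc
      exact h2 (hc ▸ hp)

def Γt : Set LL := {p | p.1 ∈ NS ∧ p ≠ (sEl 0 0, true) ∧ p ≠ ((⊤ : KK), false)}

lemma nongen_of_Γt {a : LL} (ha : a ∈ Γt) : IsLatNonGenerator a := by
  intro X hX
  by_contra hne
  obtain ⟨M, hM, hMne, hSM, haM⟩ := escape (latGen_isSub X) hne ha.1 ha.2.1 ha.2.2
  have hsub : latGen (X ∪ {a}) ⊆ M := by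
    apply latGen_subset hM
    rintro x (hx | rfl)
    · exact hSM (subset_latGen X hx)
    · exact haM
  rw [hX] at hsub
  exact hMne (le_antisymm (Set.subset_univ M) hsub)

lemma Sg_univ {m n : ℕ} {Q : Set LL} (hQ : IsCompleteSublattice Q)
    (hsub : Sg m n ⊆ Q) {q : LL} (hq : q ∈ Q) (hq1 : q.1 = sEl m (n+1)) :
    Q = Set.univ := by
  have htop : ((⊤ : KK), false) ∈ Q := hsub (sEl_ne_top m (n+1)).symm
  have he0 : ((sEl 0 0, true) : LL) ∈ Q := by
    refine hsub ?_
    show sEl 0 0 ≠ sEl m (n+1)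
    intro h; exact absurd (sEl_inj h).2 (by omega)
  have hqt : ((sEl m (n+1), true) : LL) ∈ Q ∧ ((sEl m (n+1), false) : LL) ∈ Q := by
    rcases hb : q.2 with _ | _
    · have hqQ : ((sEl m (n+1), false) : LL) ∈ Q := by
        have he : q = (sEl m (n+1), false) := Prod.ext hq1 hb
        rwa [he] at hq
      have := mix_sup hQ hqQ he0
      rw [sup_eq_left.2 (e0_le _)] at this
      exact ⟨this, hqQ⟩
    · have hqQ : ((sEl m (n+1), true) : LL) ∈ Q := by
        have he : q = (sEl m (n+1), true) := Prod.ext hq1 hb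
        rwa [he] at hq
      have := mix_inf hQ hqQ htop
      rw [inf_top_eq] at this
      exact ⟨hqQ, this⟩
  ext p
  simp only [Set.mem_univ, iff_true]
  by_cases hp : p.1 = sEl m (n+1)
  · rcases hb : p.2 with _ | _
    · have he : p = (sEl m (n+1), false) := Prod.ext hp hb
      rw [he]; exact hqt.2
    · have he : p = (sEl m (n+1), true) := Prod.ext hp hb
      rw [he]; exact hqt.1
  · exact hsub hp

lemma gen_succ (m n : ℕ) (b : Bool) : ¬ IsLatNonGenerator ((sEl m (n+1), b) : LL) := by
  intro h
  have h2 := h (Sg m n)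
  have huniv : latGen (Sg m n ∪ {((sEl m (n+1), b) : LL)}) = Set.univ := by
    exact Sg_univ (latGen_isSub _)
      (fun x hx => subset_latGen _ (Set.mem_union_left _ hx))
      (subset_latGen _ (Set.mem_union_right _ rfl)) rfl
  have := h2 huniv
  rw [latGen_self (isSub_Sg m n)] at this
  exact (max_Sg m n).2.1 this

lemma gen_e0t : ¬ IsLatNonGenerator ((sEl 0 0, true) : LL) := by
  intro h
  have h2 := h S1
  have huniv : latGen (S1 ∪ {((sEl 0 0, true) : LL)}) = Set.univ := by
    apply le_antisymm (Set.subset_univ _)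
    intro p _
    by_cases hp : p = (sEl 0 0, true)
    · exact subset_latGen _ (Or.inr hp)
    · exact subset_latGen _ (Or.inl hp)
  have := h2 huniv
  rw [latGen_self isSub_S1] at this
  exact max_S1.2.1 this

lemma Sc_e0_ne_univ : Sc (sEl 0 0) ≠ Set.univ := by
  intro h
  have : ((⊤ : KK), false) ∈ Sc (sEl 0 0) := h ▸ trivial
  rcases this with h' | h'
  · exact absurd h' (by simp)
  · exact sEl_ne_top 0 0 (top_le_iff.1 h')

lemma gen_topf : ¬ IsLatNonGenerator (((⊤ : KK), false) : LL) := by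
  intro h
  have h2 := h (Sc (sEl 0 0))
  have huniv : latGen (Sc (sEl 0 0) ∪ {(((⊤ : KK), false) : LL)}) = Set.univ := by
    apply univ_of_topF (latGen_isSub _)
    · intro k
      exact subset_latGen _ (Or.inl (Or.inl rfl))
    · exact subset_latGen _ (Or.inr rfl)
  have := h2 huniv
  rw [latGen_self (isSub_Sc _)] at this
  exact Sc_e0_ne_univ this

lemma nongen_set_eq : {a : LL | IsLatNonGenerator a} = Γt := by
  ext a
  constructor
  · intro h
    refine ⟨?_, ?_, ?_⟩
    · rcases kk_cases a.1 with h1 | h1 | ⟨m, n, h1⟩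
      · exact Or.inl h1
      · exact Or.inr h1
      · exfalso
        have he : a = (sEl m (n+1), a.2) := Prod.ext h1 rfl
        rw [he] at h
        exact gen_succ m n a.2 h
    · intro he; rw [he] at h; exact gen_e0t h
    · intro he; rw [he] at h; exact gen_topf h
  · exact nongen_of_Γt

lemma isSub_Gt : IsCompleteSublattice Gt := by
  constructor
  · intro Y hY
    constructor
    · rw [show (sInf Y).1 = sInf (Prod.fst '' Y) from Prod.fst_sInf Y]
      rcases Set.eq_empty_or_nonempty Y with rfl | hne
      · rw [Set.image_empty, sInf_empty]; exact Or.inl rfl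
      · obtain ⟨y, hy, hy1⟩ := kk_sInf_mem (hne.image Prod.fst)
        rw [← hy1]; exact (hY hy).1
    · intro hc
      exact (hY (sinf_e0t hc)).2 rfl
  · intro Y hY
    constructor
    · rw [show (sSup Y).1 = sSup (Prod.fst '' Y) from Prod.fst_sSup Y]
      apply sSup_NS
      rintro k ⟨y, hy, rfl⟩
      exact (hY hy).1
    · intro hc
      exact (hY (ssup_e0t hc)).2 rfl

lemma Γt_sub_Gt : Γt ⊆ Gt := fun p hp => ⟨hp.1, hp.2.1⟩

lemma sEl_mem_Γt (m : ℕ) : ((sEl m 0, false) : LL) ∈ Γt := by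
  refine ⟨Or.inr ⟨m, rfl⟩, ?_, ?_⟩
  · intro he
    have := congrArg Prod.snd he
    simp at this
  · intro he
    exact sEl_ne_top m 0 (congrArg Prod.fst he)

lemma latGen_Γt : latGen Γt = Gt := by
  apply Set.Subset.antisymm (latGen_subset isSub_Gt Γt_sub_Gt)
  intro p hp
  by_cases hpt : p = (((⊤ : KK), false) : LL)
  · rw [hpt]
    have := memF_sSup (latGen_isSub Γt) (A := {k : KK | ∃ m, k = sEl m 0})
      ⟨sEl 0 0, 0, rfl⟩
      (by rintro k ⟨m, rfl⟩; exact subset_latGen _ (sEl_mem_Γt m))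
    rwa [sSup_unbdd 0] at this
  · exact subset_latGen _ ⟨hp.1, hp.2, hpt⟩

lemma Gt_eq_union : Gt = Γt ∪ {(((⊤ : KK), false) : LL)} := by
  ext p
  constructor
  · intro hp
    by_cases h : p = (((⊤ : KK), false) : LL)
    · exact Or.inr h
    · exact Or.inl ⟨hp.1, hp.2, h⟩
  · rintro (hq | hq)
    · exact Γt_sub_Gt hq
    · rw [hq]
      refine ⟨Or.inl rfl, ?_⟩
      intro he
      have := congrArg Prod.snd he
      simp at this

lemma nongen_mem_max {a : LL} (ha : IsLatNonGenerator a) {P : Set LL}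
    (hP : IsMaxProperSublattice P) : a ∈ P := by
  by_contra h
  by_cases hQ : latGen (P ∪ {a}) = Set.univ
  · have := ha P hQ
    rw [latGen_self hP.1] at this
    exact hP.2.1 this
  · have hPQ : P = latGen (P ∪ {a}) :=
      hP.2.2 _ (latGen_isSub _) hQ (fun x hx => subset_latGen _ (Set.mem_union_left _ hx))
    exact h (hPQ ▸ subset_latGen _ (Set.mem_union_right _ rfl))

lemma Sc_ne_univ {c : KK} (hc : c ≠ ⊤) : Sc c ≠ Set.univ := by
  intro h
  have : (((⊤ : KK), false) : LL) ∈ Sc c := h ▸ trivial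
  rcases this with h' | h'
  · exact absurd h' (by simp)
  · exact hc (le_antisymm le_top h')

lemma topf_mem_max {P : Set LL} (hP : IsMaxProperSublattice P) :
    (((⊤ : KK), false) : LL) ∈ P := by
  by_contra h
  by_cases h2 : ((sEl 0 0, true) : LL) ∈ P
  · by_cases h1 : ∃ m n, ((sEl m (n+1), true) : LL) ∉ P ∧ ((sEl m (n+1), false) : LL) ∉ P
    · obtain ⟨m, n, ht, hf⟩ := h1
      have hsub : P ⊆ Sg m n := by
        intro p hp hc
        rcases hb : p.2 with _ | _
        · have he : p = (sEl m (n+1), false) := Prod.ext hc hb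
          exact hf (he ▸ hp)
        · have he : p = (sEl m (n+1), true) := Prod.ext hc hb
          exact ht (he ▸ hp)
      have := hP.2.2 _ (isSub_Sg m n) (max_Sg m n).2.1 hsub
      exact h (this ▸ (show (((⊤ : KK), false) : LL) ∈ Sg m n from (sEl_ne_top m (n+1)).symm))
    · push_neg at h1
      have hsucc : ∀ m n, ((sEl m (n+1), true) : LL) ∈ P ∨ ((sEl m (n+1), false) : LL) ∈ P := by
        intro m n
        by_cases hh : ((sEl m (n+1), true) : LL) ∈ P
        · exact Or.inl hh
        · exact Or.inr (h1 m n hh)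
      have hT := allT_of hP.1 h2 hsucc
      set c₀ := sSup {k : KK | (k, false) ∈ P} with hc₀
      have hc₀P : (c₀, false) ∈ P := sSupF_mem hP.1
      have hc₀top : c₀ ≠ ⊤ := fun hc => h (hc ▸ hc₀P)
      have hsub : P ⊆ Sc c₀ := by
        intro p hp
        rcases hb : p.2 with _ | _
        · right
          have he : p = (p.1, false) := Prod.ext rfl hb
          exact le_sSup (show (p.1, false) ∈ P from he ▸ hp)
        · left; exact hb
      have hPeq : P = Sc c₀ := hP.2.2 _ (isSub_Sc c₀) (Sc_ne_univ hc₀top) hsub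
      -- now climb one step higher for a contradiction with maximality
      obtain ⟨m', j, hc⟩ : ∃ m' j, c₀ = sEl m' j := by
        rcases kk_cases c₀ with hh | ⟨m', hh⟩ | ⟨m', n', hh⟩
        · exact absurd hh hc₀top
        · exact ⟨m', 0, hh⟩
        · exact ⟨m', n'+1, hh⟩
      have hsub2 : Sc c₀ ⊆ Sc (sEl m' (j+1)) := by
        rintro p (hp | hp)
        · exact Or.inl hp
        · exact Or.inr (le_trans hp (by rw [hc, sEl_le_iff]; omega))
      have hPeq2 : P = Sc (sEl m' (j+1)) := hP.2.2 _ (isSub_Sc _)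
        (Sc_ne_univ (sEl_ne_top m' (j+1))) (hPeq ▸ hsub2)
      have hmem : ((sEl m' (j+1), false) : LL) ∈ P := hPeq2 ▸ Or.inr le_rfl
      rw [hPeq] at hmem
      rcases hmem with hh | hh
      · exact absurd hh (by simp)
      · rw [hc, sEl_le_iff] at hh; omega
  · have hsub : P ⊆ S1 := fun p hp hc => h2 (hc ▸ hp)
    have := hP.2.2 _ isSub_S1 max_S1.2.1 hsub
    refine h (this ▸ ?_)
    show (((⊤ : KK), false) : LL) ≠ (sEl 0 0, true)
    intro he
    exact sEl_ne_top 0 0 (congrArg Prod.fst he).symm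

lemma Phi_eq_Gt : ⋂₀ {P : Set LL | IsMaxProperSublattice P} = Gt := by
  apply Set.Subset.antisymm
  · intro p hp
    constructor
    · rcases kk_cases p.1 with h1 | h1 | ⟨m, n, h1⟩
      · exact Or.inl h1
      · exact Or.inr h1
      · exact absurd h1 (hp (Sg m n) (max_Sg m n))
    · exact hp S1 max_S1
  · intro p hp
    intro P hPmax
    by_cases hpt : p = (((⊤ : KK), false) : LL)
    · exact hpt ▸ topf_mem_max hPmax
    · exact nongen_mem_max (nongen_of_Γt ⟨hp.1, hp.2, hpt⟩) hPmax

/-- In `L₂ = (WithTop (ℕ ×ₗ ℕ)) × Bool`, the intersection `Φ` of all maximal proper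
complete sublattices equals `⟨Γ⟩`, the complete sublattice generated by the set `Γ` of
non-generators, and `⟨Γ⟩ = Γ ∪ {(⊤, false)}`. -/
theorem sInter_maxProper_L2 :
    ⋂₀ {P : Set (WithTop (ℕ ×ₗ ℕ) × Bool) | IsMaxProperSublattice P} =
      latGen {a : WithTop (ℕ ×ₗ ℕ) × Bool | IsLatNonGenerator a} ∧
    latGen {a : WithTop (ℕ ×ₗ ℕ) × Bool | IsLatNonGenerator a} =
      {a : WithTop (ℕ ×ₗ ℕ) × Bool | IsLatNonGenerator a} ∪
        {((⊤ : WithTop (ℕ ×ₗ ℕ)), false)} := by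
  constructor
  · rw [show {a : WithTop (ℕ ×ₗ ℕ) × Bool | IsLatNonGenerator a} = Γt from nongen_set_eq,
      latGen_Γt, Phi_eq_Gt]
  · rw [show {a : WithTop (ℕ ×ₗ ℕ) × Bool | IsLatNonGenerator a} = Γt from nongen_set_eq,
      latGen_Γt, Gt_eq_union]
end

section
/- Let K = WithTop (ℕ ×ₗ ℕ) and L₂ = K × Bool with the componentwise lattice order. The maximal proper complete sublattices of L₂ are exactly the following sets: L₂ ∖ {((0,0), true)}, and L₂ ∖ {((n,m), false), ((n,m), true)} for natural numbers n, m with m ≥ 1. -/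
namespace IsCompleteSublattice

variable {L : Type*} [CompleteLattice L] {P : Set L}

theorem sup_mem (hP : IsCompleteSublattice P) {x y : L} (hx : x ∈ P) (hy : y ∈ P) :
    x ⊔ y ∈ P := by
  simpa using hP.2 {x, y} (Set.pair_subset hx hy)

theorem inf_mem (hP : IsCompleteSublattice P) {x y : L} (hx : x ∈ P) (hy : y ∈ P) :
    x ⊓ y ∈ P := by
  simpa using hP.1 {x, y} (Set.pair_subset hx hy)

end IsCompleteSublattice

section CompleteLattice

variable {L : Type*} [CompleteLattice L]

theorem isCompleteSublattice_compl_singleton {a : L} (hsup : ∀ Y : Set L, sSup Y = a → a ∈ Y)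
    (hinf : ∀ Y : Set L, sInf Y = a → a ∈ Y) : IsCompleteSublattice {a}ᶜ :=
  ⟨fun Y hY h => hY (hinf Y h) rfl, fun Y hY h => hY (hsup Y h) rfl⟩

theorem IsCompleteSublattice.isMaxProperSublattice_compl_singleton {a : L}
    (h : IsCompleteSublattice {a}ᶜ) : IsMaxProperSublattice {a}ᶜ := by
  refine ⟨h, Set.compl_ne_univ.mpr (Set.singleton_nonempty a),
    fun Q _ hQ hPQ => hPQ.antisymm fun x hx hxa => hQ ?_⟩
  rw [Set.eq_univ_iff_forall]
  intro z
  by_cases hz : z = a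
  · exact hz ▸ (Set.mem_singleton_iff.mp hxa) ▸ hx
  · exact hPQ hz

end CompleteLattice

theorem preimage_fst_compl_singleton {α : Type*} (a : α) :
    (Prod.fst ⁻¹' {a}ᶜ : Set (α × Bool)) = {(a, false), (a, true)}ᶜ := by
  ext ⟨a', b⟩; cases b <;> simp

section Product

variable {K : Type*} [CompleteLattice K]

theorem IsCompleteSublattice.preimage_fst {B : Type*} [CompleteLattice B] {S : Set K}
    (hS : IsCompleteSublattice S) : IsCompleteSublattice (Prod.fst ⁻¹' S : Set (K × B)) :=
  ⟨fun Y hY => by rw [Set.mem_preimage, Prod.fst_sInf]; exact hS.1 _ (Set.image_subset_iff.mpr hY),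
   fun Y hY => by rw [Set.mem_preimage, Prod.fst_sSup]; exact hS.2 _ (Set.image_subset_iff.mpr hY)⟩

theorem snd_sSup_eq_true_iff {Y : Set (K × Bool)} : (sSup Y).2 = true ↔ ∃ y ∈ Y, y.2 = true := by
  rw [← top_eq_true, Prod.snd_sSup, sSup_eq_top]
  simp

theorem snd_sInf_eq_true_iff {Y : Set (K × Bool)} : (sInf Y).2 = true ↔ ∀ y ∈ Y, y.2 = true := by
  rw [← top_eq_true, Prod.snd_sInf, sInf_eq_top]
  simp

theorem sup_bot_true (x : K × Bool) : x ⊔ (⊥, true) = (x.1, true) := by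
  ext <;> simp

theorem inf_top_false (x : K × Bool) : x ⊓ (⊤, false) = (x.1, false) := by
  ext <;> simp

theorem isCompleteSublattice_compl_bot_true (hK : ∀ Y : Set K, sInf Y = ⊥ → ⊥ ∈ Y) :
    IsCompleteSublattice ({(⊥, true)}ᶜ : Set (K × Bool)) := by
  refine isCompleteSublattice_compl_singleton (fun Y hY => ?_) (fun Y hY => ?_)
  · obtain ⟨y, hy, hy2⟩ := snd_sSup_eq_true_iff.mp (congrArg Prod.snd hY)
    have hy1 : y.1 ≤ ⊥ := by simpa [hY] using (le_sSup hy).1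
    have hy_eq : y = (⊥, true) := Prod.ext (le_bot_iff.mp hy1) hy2
    exact hy_eq ▸ hy
  · have htrue := snd_sInf_eq_true_iff.mp (congrArg Prod.snd hY)
    obtain ⟨y, hy, hy1⟩ := hK (Prod.fst '' Y) (by rw [← Prod.fst_sInf, hY])
    have hy_eq : y = (⊥, true) := Prod.ext hy1 (htrue y hy)
    exact hy_eq ▸ hy

theorem isMaxProperSublattice_preimage_fst_compl {a : K} (ha_bot : a ≠ ⊥) (ha_top : a ≠ ⊤)
    (h : IsCompleteSublattice ({a}ᶜ : Set K)) :
    IsMaxProperSublattice (Prod.fst ⁻¹' {a}ᶜ : Set (K × Bool)) := by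
  refine ⟨h.preimage_fst, fun h' => (Set.eq_univ_iff_forall.mp h' (a, true)) rfl,
    fun Q hQ hQne hPQ => hPQ.antisymm fun x hx hxa => hQne ?_⟩
  have hbot : ((⊥, true) : K × Bool) ∈ Q := hPQ (Ne.symm ha_bot)
  have htop : ((⊤, false) : K × Bool) ∈ Q := hPQ (Ne.symm ha_top)
  rw [Set.eq_univ_iff_forall]
  rintro ⟨k, b⟩
  by_cases hk : k = a
  · obtain rfl : x.1 = k := hk ▸ hxa
    cases b
    · simpa [inf_top_false] using hQ.inf_mem hx htop
    · simpa [sup_bot_true] using hQ.sup_mem hx hbot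
  · exact hPQ hk

theorem IsCompleteSublattice.mk_true_mem {P : Set (K × Bool)} (hP : IsCompleteSublattice P)
    (hbot : (⊥, true) ∈ P) {x : K × Bool} (hx : x ∈ P) : (x.1, true) ∈ P := by
  simpa [sup_bot_true] using hP.sup_mem hx hbot

theorem IsCompleteSublattice.sSup_mk_true_mem {P : Set (K × Bool)} (hP : IsCompleteSublattice P)
    (hbot : (⊥, true) ∈ P) {Y : Set K} (hY : ∀ k ∈ Y, (k, true) ∈ P) : (sSup Y, true) ∈ P := by
  have hsub : insert (⊥, true) ((·, true) '' Y) ⊆ P :=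
    Set.insert_subset hbot (Set.image_subset_iff.mpr hY)
  have hsSup : sSup (insert (⊥, true) ((·, true) '' Y)) = (sSup Y, true) := by
    refine Prod.ext ?_ (snd_sSup_eq_true_iff.mpr ⟨_, Set.mem_insert _ _, rfl⟩)
    simp [Prod.fst_sSup, Set.image_image]
  exact hsSup ▸ hP.2 _ hsub

def falseBelow (s : K) : Set (K × Bool) := {x | x.2 = true ∨ x.1 ≤ s}

theorem isCompleteSublattice_falseBelow (s : K) : IsCompleteSublattice (falseBelow s) := by
  refine ⟨fun Y hY => ?_, fun Y hY => ?_⟩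
  · by_cases h : ∀ y ∈ Y, y.2 = true
    · exact Or.inl (snd_sInf_eq_true_iff.mpr h)
    · push Not at h
      obtain ⟨y, hy, hy2⟩ := h
      exact Or.inr ((sInf_le hy).1.trans ((hY hy).resolve_left hy2))
  · by_cases h : ∃ y ∈ Y, y.2 = true
    · exact Or.inl (snd_sSup_eq_true_iff.mpr h)
    · push Not at h
      refine Or.inr (Prod.fst_sSup Y ▸ sSup_le ?_)
      rintro _ ⟨y, hy, rfl⟩
      exact (hY hy).resolve_left (h y hy)

theorem falseBelow_ne_univ {s : K} (hs : s ≠ ⊤) : falseBelow s ≠ Set.univ := by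
  intro h
  have htop : ((⊤, false) : K × Bool) ∈ falseBelow s := h ▸ Set.mem_univ _
  exact hs (top_le_iff.mp (htop.resolve_left Bool.false_ne_true))

theorem IsMaxProperSublattice.exists_mk_true_not_mem (hK : ∀ s : K, ¬ s ⋖ ⊤)
    {P : Set (K × Bool)} (hP : IsMaxProperSublattice P) : ∃ k, (k, true) ∉ P := by
  by_contra! htrue
  set Y := {x ∈ P | x.2 = false}
  set s := (sSup Y).1
  have hs_mem : (s, false) ∈ P := by
    have hsnd : (sSup Y).2 = false := Bool.eq_false_iff.mpr fun h => by
      obtain ⟨y, hy, hy2⟩ := snd_sSup_eq_true_iff.mp h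
      exact Bool.false_ne_true (hy.2.symm.trans hy2)
    simpa [← hsnd] using hP.1.2 Y fun x hx => hx.1
  have hPs : P ⊆ falseBelow s := fun x hx => by
    by_cases hx2 : x.2 = true
    · exact Or.inl hx2
    · exact Or.inr (le_sSup (show x ∈ Y from ⟨hx, Bool.eq_false_iff.mpr hx2⟩)).1
  by_cases hs : s = ⊤
  · rw [hs] at hs_mem
    apply hP.2.1
    rw [Set.eq_univ_iff_forall]
    rintro ⟨k, b⟩
    cases b
    · simpa only [inf_top_false] using hP.1.inf_mem (htrue k) hs_mem
    · exact htrue k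
  · obtain ⟨t, hst, ht⟩ := (not_covBy_iff (lt_top_iff_ne_top.mpr hs)).mp (hK s)
    have hPt : P = falseBelow t := hP.2.2 _ (isCompleteSublattice_falseBelow t)
      (falseBelow_ne_univ ht.ne) fun x hx => (hPs hx).imp_right (·.trans hst.le)
    have hts : (t, false) ∈ falseBelow s := hPs (hPt ▸ Or.inr le_rfl)
    exact hst.not_ge (hts.resolve_left Bool.false_ne_true)

end Product

section WellOrder

variable {K : Type*} [CompleteLinearOrder K]

theorem mem_of_sSup_eq_of_covBy {Y : Set K} {a b : K} (hba : b ⋖ a) (h : sSup Y = a) : a ∈ Y := by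
  by_contra ha
  have : sSup Y ≤ b := sSup_le fun y hy =>
    hba.le_of_lt ((h ▸ le_sSup hy).lt_of_ne fun hya => ha (hya ▸ hy))
  exact (h ▸ this).not_gt hba.lt

theorem mem_of_sInf_eq_of_ne_top [WellFoundedLT K] {Y : Set K} {a : K} (ha : a ≠ ⊤)
    (h : sInf Y = a) : a ∈ Y := by
  obtain rfl | hY := Y.eq_empty_or_nonempty
  · exact absurd (sInf_empty.symm.trans h) ha.symm
  · exact h ▸ csInf_mem hY

end WellOrder

def lexPair (n m : ℕ) : WithTop (ℕ ×ₗ ℕ) := (toLex (n, m) : ℕ ×ₗ ℕ)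

theorem lexPair_zero_zero : lexPair 0 0 = ⊥ := by
  refine le_bot_iff.mp (WithTop.coe_le_coe.mpr ?_)
  rw [← toLex_ofLex ⊥, Prod.Lex.toLex_le_toLex]
  omega

theorem lexPair_covBy (n m : ℕ) : lexPair n m ⋖ lexPair n (m + 1) :=
  WithTop.coe_covBy_coe.mpr <|
    Prod.Lex.toLex_covBy_toLex_iff.mpr (Or.inl ⟨rfl, Order.covBy_add_one m⟩)

theorem sSup_lexPair_succ_le (k : WithTop (ℕ ×ₗ ℕ)) :
    sSup {x | x ≤ k ∧ ∃ n m, x = lexPair n (m + 1)} = k := by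
  refine le_antisymm (sSup_le fun x hx => hx.1) (le_of_forall_lt fun c hc => ?_)
  obtain ⟨a, rfl⟩ := WithTop.ne_top_iff_exists.mp hc.ne_top
  have hcov : lexPair (ofLex a).1 (ofLex a).2 ⋖ _ := lexPair_covBy (ofLex a).1 (ofLex a).2
  exact hcov.lt.trans_le (le_sSup ⟨hcov.ge_of_gt hc, _, _, rfl⟩)

theorem isCompleteSublattice_compl_lexPair_succ (n m : ℕ) :
    IsCompleteSublattice ({lexPair n (m + 1)}ᶜ : Set (WithTop (ℕ ×ₗ ℕ))) :=
  isCompleteSublattice_compl_singleton (fun _ => mem_of_sSup_eq_of_covBy (lexPair_covBy n m))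
    (fun _ => mem_of_sInf_eq_of_ne_top WithTop.coe_ne_top)

theorem isMaxProperSublattice_compl_bot_true :
    IsMaxProperSublattice ({(⊥, true)}ᶜ : Set (WithTop (ℕ ×ₗ ℕ) × Bool)) :=
  (isCompleteSublattice_compl_bot_true fun _ => mem_of_sInf_eq_of_ne_top bot_ne_top)
    |>.isMaxProperSublattice_compl_singleton

theorem isMaxProperSublattice_preimage_fst_compl_lexPair (n m : ℕ) :
    IsMaxProperSublattice (Prod.fst ⁻¹' {lexPair n (m + 1)}ᶜ : Set (WithTop (ℕ ×ₗ ℕ) × Bool)) :=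
  isMaxProperSublattice_preimage_fst_compl (ne_bot_of_gt (lexPair_covBy n m).lt) WithTop.coe_ne_top
    (isCompleteSublattice_compl_lexPair_succ n m)

theorem IsMaxProperSublattice.eq_compl_or_eq_preimage_fst {P : Set (WithTop (ℕ ×ₗ ℕ) × Bool)}
    (hP : IsMaxProperSublattice P) :
    P = {(⊥, true)}ᶜ ∨ ∃ n m, P = Prod.fst ⁻¹' {lexPair n (m + 1)}ᶜ := by
  by_cases hbot : (⊥, true) ∈ P
  swap
  · have hmax := isMaxProperSublattice_compl_bot_true
    exact Or.inl <| hP.2.2 _ hmax.1 hmax.2.1 fun x hx hx' =>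
      hbot (Set.mem_singleton_iff.mp hx' ▸ hx)
  by_cases hfib : ∃ n m, ∀ x ∈ P, x.1 ≠ lexPair n (m + 1)
  · obtain ⟨n, m, hfib⟩ := hfib
    have hmax := isMaxProperSublattice_preimage_fst_compl_lexPair n m
    exact Or.inr ⟨n, m, hP.2.2 _ hmax.1 hmax.2.1 hfib⟩
  push Not at hfib
  obtain ⟨k, hk⟩ := hP.exists_mk_true_not_mem fun _ => WithTop.not_covBy_top
  refine absurd ?_ hk
  rw [← sSup_lexPair_succ_le k]
  refine hP.1.sSup_mk_true_mem hbot ?_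
  rintro _ ⟨-, n, m, rfl⟩
  obtain ⟨x, hx, hx1⟩ := hfib n m
  exact hx1 ▸ hP.1.mk_true_mem hbot hx

/-- The maximal proper complete sublattices of `L₂ = (WithTop (ℕ ×ₗ ℕ)) × Bool` are
exactly `L₂ \ {((0,0), true)}` and `L₂ \ {((n,m), false), ((n,m), true)}` for `m ≥ 1`. -/
theorem maxProper_L2_classification :
    ∀ P : Set (WithTop (ℕ ×ₗ ℕ) × Bool),
      IsMaxProperSublattice P ↔
        (P = Set.univ \ {(((toLex (0, 0) : ℕ ×ₗ ℕ) : WithTop (ℕ ×ₗ ℕ)), true)} ∨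
          ∃ n m : ℕ, 1 ≤ m ∧
            P = Set.univ \
              {(((toLex (n, m) : ℕ ×ₗ ℕ) : WithTop (ℕ ×ₗ ℕ)), false),
               (((toLex (n, m) : ℕ ×ₗ ℕ) : WithTop (ℕ ×ₗ ℕ)), true)}) := by
  intro P
  simp only [← Set.compl_eq_univ_sdiff, ← preimage_fst_compl_singleton]
  change IsMaxProperSublattice P ↔
    P = {(lexPair 0 0, true)}ᶜ ∨ ∃ n m, 1 ≤ m ∧ P = Prod.fst ⁻¹' {lexPair n m}ᶜ
  rw [lexPair_zero_zero]
  constructor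
  · intro hP
    rcases hP.eq_compl_or_eq_preimage_fst with h | ⟨n, m, h⟩
    · exact Or.inl h
    · exact Or.inr ⟨n, m + 1, m.succ_pos, h⟩
  · rintro (rfl | ⟨n, m, hm, rfl⟩)
    · exact isMaxProperSublattice_compl_bot_true
    · obtain ⟨m, rfl⟩ := Nat.exists_eq_add_of_le' hm
      exact isMaxProperSublattice_preimage_fst_compl_lexPair n m
end

section
/- Let L₃ = I × Bool, where I = [0,1] ⊆ ℝ is the unit interval with its complete lattice structure, ordered componentwise, and let Γ be the set of non-generators of L₃. Then Γ is not a complete sublattice of L₃, and the complete sublattice generated by Γ is all of L₃. -/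
instance : Fact ((0 : ℝ) ≤ 1) := ⟨zero_le_one⟩

namespace L3Aux

open Set

abbrev II : Type := Set.Icc (0:ℝ) 1
abbrev L3 : Type := II × Bool

variable {S : Set L3}

/- ### generalities about latGen -/

lemma latGen_isCS (X : Set L3) : IsCompleteSublattice (latGen X) := by
  constructor
  · intro Y hY
    exact Set.mem_sInter.2 fun s hs => hs.1.1 Y fun p hp => Set.mem_sInter.1 (hY hp) s hs
  · intro Y hY
    exact Set.mem_sInter.2 fun s hs => hs.1.2 Y fun p hp => Set.mem_sInter.1 (hY hp) s hs

lemma subset_latGen (X : Set L3) : X ⊆ latGen X :=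
  fun p hp => Set.mem_sInter.2 fun _ hs => hs.2 hp

lemma latGen_subset {X S : Set L3} (hS : IsCompleteSublattice S) (hX : X ⊆ S) :
    latGen X ⊆ S :=
  fun p hp => Set.mem_sInter.1 hp S ⟨hS, hX⟩

/- ### membership of sups/infs in the fibers -/

lemma bot_mem (hS : IsCompleteSublattice S) : ((⊥ : II), false) ∈ S := by
  have := hS.2 ∅ (empty_subset S)
  rwa [sSup_empty] at this

lemma top_mem (hS : IsCompleteSublattice S) : ((⊤ : II), true) ∈ S := by
  have := hS.1 ∅ (empty_subset S)
  rwa [sInf_empty] at this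

lemma supF_mem (hS : IsCompleteSublattice S) {T : Set II}
    (hT : ∀ t ∈ T, ((t, false) : L3) ∈ S) : ((sSup T, false) : L3) ∈ S := by
  have hmem := hS.2 ((fun t => ((t, false) : L3)) '' T)
    (by rintro _ ⟨t, ht, rfl⟩; exact hT t ht)
  have heq : sSup ((fun t => ((t, false) : L3)) '' T) = (sSup T, false) := by
    apply Prod.ext
    · rw [Prod.fst_sSup, Set.image_image]
      simp
    · rw [Prod.snd_sSup, Set.image_image]
      refine le_antisymm (sSup_le ?_) bot_le
      rintro _ ⟨t, ht, rfl⟩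
      exact le_rfl
  rwa [heq] at hmem

lemma infT_mem (hS : IsCompleteSublattice S) {T : Set II}
    (hT : ∀ t ∈ T, ((t, true) : L3) ∈ S) : ((sInf T, true) : L3) ∈ S := by
  have hmem := hS.1 ((fun t => ((t, true) : L3)) '' T)
    (by rintro _ ⟨t, ht, rfl⟩; exact hT t ht)
  have heq : sInf ((fun t => ((t, true) : L3)) '' T) = (sInf T, true) := by
    apply Prod.ext
    · rw [Prod.fst_sInf, Set.image_image]
      simp
    · rw [Prod.snd_sInf, Set.image_image]
      refine le_antisymm le_top (le_sInf ?_)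
      rintro _ ⟨t, ht, rfl⟩
      exact le_rfl
  rwa [heq] at hmem

lemma supT_mem (hS : IsCompleteSublattice S) {T : Set II} (hne : T.Nonempty)
    (hT : ∀ t ∈ T, ((t, true) : L3) ∈ S) : ((sSup T, true) : L3) ∈ S := by
  have hmem := hS.2 ((fun t => ((t, true) : L3)) '' T)
    (by rintro _ ⟨t, ht, rfl⟩; exact hT t ht)
  have heq : sSup ((fun t => ((t, true) : L3)) '' T) = (sSup T, true) := by
    apply Prod.ext
    · rw [Prod.fst_sSup, Set.image_image]
      simp
    · rw [Prod.snd_sSup, Set.image_image]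
      obtain ⟨t0, ht0⟩ := hne
      exact le_antisymm le_top (le_sSup ⟨t0, ht0, rfl⟩)
  rwa [heq] at hmem

lemma infF_mem (hS : IsCompleteSublattice S) {T : Set II} (hne : T.Nonempty)
    (hT : ∀ t ∈ T, ((t, false) : L3) ∈ S) : ((sInf T, false) : L3) ∈ S := by
  have hmem := hS.1 ((fun t => ((t, false) : L3)) '' T)
    (by rintro _ ⟨t, ht, rfl⟩; exact hT t ht)
  have heq : sInf ((fun t => ((t, false) : L3)) '' T) = (sInf T, false) := by
    apply Prod.ext
    · rw [Prod.fst_sInf, Set.image_image]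
      simp
    · rw [Prod.snd_sInf, Set.image_image]
      obtain ⟨t0, ht0⟩ := hne
      exact le_antisymm (sInf_le ⟨t0, ht0, rfl⟩) bot_le
  rwa [heq] at hmem

lemma pair_up (hS : IsCompleteSublattice S) {a b : II}
    (ha : ((a, false) : L3) ∈ S) (hb : ((b, true) : L3) ∈ S) (hba : b ≤ a) :
    ((a, true) : L3) ∈ S := by
  have hmem := hS.2 {((a, false) : L3), (b, true)}
    (by rintro p (rfl | rfl) <;> assumption)
  rw [sSup_pair] at hmem
  have : ((a, false) : L3) ⊔ (b, true) = (a, true) := by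
    show ((a ⊔ b, false ⊔ true) : L3) = (a, true)
    rw [sup_eq_left.2 hba]
    rfl
  rwa [this] at hmem

lemma pair_down (hS : IsCompleteSublattice S) {a b : II}
    (ha : ((a, false) : L3) ∈ S) (hb : ((b, true) : L3) ∈ S) (hba : b ≤ a) :
    ((b, false) : L3) ∈ S := by
  have hmem := hS.1 {((a, false) : L3), (b, true)}
    (by rintro p (rfl | rfl) <;> assumption)
  rw [sInf_pair] at hmem
  have : ((a, false) : L3) ⊓ (b, true) = (b, false) := by
    show ((a ⊓ b, false ⊓ true) : L3) = (b, false)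
    rw [inf_eq_right.2 hba]
    rfl
  rwa [this] at hmem


/- ### Bool helpers -/

lemma bool_eq_true_of_true_le {b : Bool} (h : true ≤ b) : b = true := by
  cases b
  · exact absurd h (by decide)
  · rfl

lemma bool_eq_false_of_le_false {b : Bool} (h : b ≤ false) : b = false := by
  cases b
  · rfl
  · exact absurd h (by decide)

lemma bool_eq_false_of_ne_true {b : Bool} (h : b ≠ true) : b = false := by
  cases b
  · rfl
  · exact absurd rfl h

/- ### three shapes of proper complete sublattices -/

lemma Qcs (c : II) : IsCompleteSublattice {p : L3 | p.2 = true ∨ p.1 ≤ c} := by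
  constructor
  · intro Y hY
    by_cases hall : ∀ p ∈ Y, p.2 = true
    · left
      have hle : ((⊥, true) : L3) ≤ sInf Y := by
        apply le_sInf
        intro p hp
        exact Prod.le_def.2 ⟨bot_le, by rw [hall p hp]⟩
      exact bool_eq_true_of_true_le (Prod.le_def.1 hle).2
    · right
      push_neg at hall
      obtain ⟨p, hp, hp2⟩ := hall
      have hpc : p.1 ≤ c := (hY hp).resolve_left hp2
      exact le_trans (Prod.le_def.1 (sInf_le hp)).1 hpc
  · intro Y hY
    by_cases hex : ∃ p ∈ Y, p.2 = true
    · left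
      obtain ⟨p, hp, hp2⟩ := hex
      have := (Prod.le_def.1 (le_sSup hp)).2
      rw [hp2] at this
      exact bool_eq_true_of_true_le this
    · right
      have : sSup Y ≤ ((c, false) : L3) := by
        apply sSup_le
        intro p hp
        have hp2 : p.2 = false := bool_eq_false_of_ne_true fun h => hex ⟨p, hp, h⟩
        have hpc : p.1 ≤ c := (hY hp).resolve_left (by rw [hp2]; decide)
        exact Prod.le_def.2 ⟨hpc, by rw [hp2]⟩
      exact (Prod.le_def.1 this).1

lemma Qne {c : II} (hc : c ≠ ⊤) : {p : L3 | p.2 = true ∨ p.1 ≤ c} ≠ Set.univ := by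
  intro h
  have : ((⊤, false) : L3) ∈ {p : L3 | p.2 = true ∨ p.1 ≤ c} := h ▸ Set.mem_univ _
  rcases this with h1 | h1
  · exact absurd h1 (by decide)
  · exact hc (top_le_iff.1 h1)

lemma Rcs (c : II) : IsCompleteSublattice {p : L3 | p.2 = false ∨ c ≤ p.1} := by
  constructor
  · intro Y hY
    by_cases hall : ∀ p ∈ Y, p.2 = true
    · right
      have : ((c, true) : L3) ≤ sInf Y := by
        apply le_sInf
        intro p hp
        have hp2 : c ≤ p.1 := (hY hp).resolve_left (by rw [hall p hp]; decide)
        exact Prod.le_def.2 ⟨hp2, le_of_eq (hall p hp).symm⟩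
      exact (Prod.le_def.1 this).1
    · left
      push_neg at hall
      obtain ⟨p, hp, hp2⟩ := hall
      have := (Prod.le_def.1 (sInf_le hp)).2
      rw [bool_eq_false_of_ne_true hp2] at this
      exact bool_eq_false_of_le_false this
  · intro Y hY
    by_cases hex : ∃ p ∈ Y, p.2 = true
    · right
      obtain ⟨p, hp, hp2⟩ := hex
      have hcp : c ≤ p.1 := (hY hp).resolve_left (by rw [hp2]; decide)
      exact le_trans hcp (Prod.le_def.1 (le_sSup hp)).1
    · left
      have : sSup Y ≤ ((⊤, false) : L3) := by
        apply sSup_le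
        intro p hp
        have hp2 : p.2 = false := bool_eq_false_of_ne_true fun h => hex ⟨p, hp, h⟩
        exact Prod.le_def.2 ⟨le_top, by rw [hp2]⟩
      exact bool_eq_false_of_le_false (Prod.le_def.1 this).2

lemma Rne {c : II} (hc : c ≠ ⊥) : {p : L3 | p.2 = false ∨ c ≤ p.1} ≠ Set.univ := by
  intro h
  have : ((⊥, true) : L3) ∈ {p : L3 | p.2 = false ∨ c ≤ p.1} := h ▸ Set.mem_univ _
  rcases this with h1 | h1
  · exact absurd h1 (by decide)
  · exact hc (le_bot_iff.1 h1)

lemma Pcs (u v : II) : IsCompleteSublattice {p : L3 | p.1 ≤ u ∨ v ≤ p.1} := by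
  constructor
  · intro Y hY
    by_cases hex : ∃ p ∈ Y, p.1 ≤ u
    · left
      obtain ⟨p, hp, hp1⟩ := hex
      exact le_trans (Prod.le_def.1 (sInf_le hp)).1 hp1
    · right
      have : ((v, false) : L3) ≤ sInf Y := by
        apply le_sInf
        intro p hp
        have : v ≤ p.1 := (hY hp).resolve_left fun h => hex ⟨p, hp, h⟩
        exact Prod.le_def.2 ⟨this, bot_le⟩
      exact (Prod.le_def.1 this).1
  · intro Y hY
    by_cases hex : ∃ p ∈ Y, v ≤ p.1
    · right
      obtain ⟨p, hp, hp1⟩ := hex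
      exact le_trans hp1 (Prod.le_def.1 (le_sSup hp)).1
    · left
      have : sSup Y ≤ ((u, true) : L3) := by
        apply sSup_le
        intro p hp
        have : p.1 ≤ u := (hY hp).resolve_right fun h => hex ⟨p, hp, h⟩
        exact Prod.le_def.2 ⟨this, le_top⟩
      exact (Prod.le_def.1 this).1

lemma Pne {u v : II} (huv : u < v) : {p : L3 | p.1 ≤ u ∨ v ≤ p.1} ≠ Set.univ := by
  obtain ⟨t, htu, htv⟩ := exists_between huv
  intro h
  have : ((t, false) : L3) ∈ {p : L3 | p.1 ≤ u ∨ v ≤ p.1} := h ▸ Set.mem_univ _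
  rcases this with h1 | h1
  · exact absurd h1 (not_le.2 htu)
  · exact absurd h1 (not_le.2 htv)


/- ### the extension lemmas -/

lemma no_single_gap (hS : IsCompleteSublattice S) (x : II)
    (hxF : ((x, false) : L3) ∉ S) (hxT : ((x, true) : L3) ∉ S)
    (hall : ∀ y : II, y ≠ x → (((y, false) : L3) ∈ S ∨ ((y, true) : L3) ∈ S)) : False := by
  have hxbot : (⊥ : II) < x :=
    lt_of_le_of_ne bot_le fun h => hxF (h ▸ bot_mem hS)
  have haS : ((sSup {t : II | ((t, false) : L3) ∈ S ∧ t ≤ x}, false) : L3) ∈ S :=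
    supF_mem hS fun t ht => ht.1
  have halt : sSup {t : II | ((t, false) : L3) ∈ S ∧ t ≤ x} < x :=
    lt_of_le_of_ne (sSup_le fun t ht => ht.2) fun h => hxF (h ▸ haS)
  have hblt : sSup {t : II | ((t, true) : L3) ∈ S ∧ t ≤ x} < x := by
    rcases Set.eq_empty_or_nonempty {t : II | ((t, true) : L3) ∈ S ∧ t ≤ x} with he | hne
    · rw [he, sSup_empty]; exact hxbot
    · have hbS := supT_mem hS hne (fun t ht => ht.1)
      exact lt_of_le_of_ne (sSup_le fun t ht => ht.2) fun h => hxT (h ▸ hbS)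
  have hm : sSup {t : II | ((t, false) : L3) ∈ S ∧ t ≤ x} ⊔
      sSup {t : II | ((t, true) : L3) ∈ S ∧ t ≤ x} < x := sup_lt_iff.2 ⟨halt, hblt⟩
  obtain ⟨t, htm, htx⟩ := exists_between hm
  rcases hall t (ne_of_lt htx) with h | h
  · exact absurd ((le_sSup (show t ∈ {t : II | ((t, false) : L3) ∈ S ∧ t ≤ x} from
      ⟨h, htx.le⟩)).trans le_sup_left) (not_le.2 htm)
  · exact absurd ((le_sSup (show t ∈ {t : II | ((t, true) : L3) ∈ S ∧ t ≤ x} from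
      ⟨h, htx.le⟩)).trans le_sup_right) (not_le.2 htm)

lemma wall (hS : IsCompleteSublattice S) (y : II)
    (hyF : ((y, false) : L3) ∉ S) (hyT : ((y, true) : L3) ∉ S) (x : II) (hxy : x ≠ y) :
    ∃ S' : Set L3, IsCompleteSublattice S' ∧ S' ≠ Set.univ ∧ S ⊆ S' ∧
      ∀ b : Bool, ((x, b) : L3) ∈ S' := by
  classical
  have hybot : (⊥ : II) < y := lt_of_le_of_ne bot_le fun h => hyF (h ▸ bot_mem hS)
  have hytop : y < ⊤ := lt_of_le_of_ne le_top fun h => hyT (by rw [h]; exact top_mem hS)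
  set u : II := (sSup {t : II | ((t, false) : L3) ∈ S ∧ t ≤ y}) ⊔
      (sSup {t : II | ((t, true) : L3) ∈ S ∧ t ≤ y}) ⊔ (if x ≤ y then x else ⊥) with hu
  set v : II := (sInf {t : II | ((t, false) : L3) ∈ S ∧ y ≤ t}) ⊓
      (sInf {t : II | ((t, true) : L3) ∈ S ∧ y ≤ t}) ⊓ (if y ≤ x then x else ⊤) with hv
  have hult : u < y := by
    rw [hu]
    refine sup_lt_iff.2 ⟨sup_lt_iff.2 ⟨?_, ?_⟩, ?_⟩
    · exact lt_of_le_of_ne (sSup_le fun t ht => ht.2)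
        fun h => hyF (h ▸ supF_mem hS fun t ht => ht.1)
    · rcases Set.eq_empty_or_nonempty {t : II | ((t, true) : L3) ∈ S ∧ t ≤ y} with he | hne
      · rw [he, sSup_empty]; exact hybot
      · exact lt_of_le_of_ne (sSup_le fun t ht => ht.2)
          fun h => hyT (h ▸ supT_mem hS hne fun t ht => ht.1)
    · split_ifs with h
      · exact lt_of_le_of_ne h hxy
      · exact hybot
  have hvgt : y < v := by
    rw [hv]
    refine lt_inf_iff.2 ⟨lt_inf_iff.2 ⟨?_, ?_⟩, ?_⟩
    · rcases Set.eq_empty_or_nonempty {t : II | ((t, false) : L3) ∈ S ∧ y ≤ t} with he | hne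
      · rw [he, sInf_empty]; exact hytop
      · refine lt_of_le_of_ne (le_sInf fun t ht => ht.2) fun h => hyF ?_
        rw [h]; exact infF_mem hS hne fun t ht => ht.1
    · refine lt_of_le_of_ne (le_sInf fun t ht => ht.2) fun h => hyT ?_
      rw [h]; exact infT_mem hS fun t ht => ht.1
    · split_ifs with h
      · exact lt_of_le_of_ne h fun he => hxy he.symm
      · exact hytop
  refine ⟨{p : L3 | p.1 ≤ u ∨ v ≤ p.1}, Pcs u v, Pne (hult.trans hvgt), ?_, ?_⟩
  · rintro ⟨t, b⟩ hp
    rcases le_total t y with hty | hyt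
    · left
      rw [hu]
      cases b
      · exact ((le_sSup (show t ∈ {t : II | ((t, false) : L3) ∈ S ∧ t ≤ y} from
          ⟨hp, hty⟩)).trans le_sup_left).trans le_sup_left
      · exact ((le_sSup (show t ∈ {t : II | ((t, true) : L3) ∈ S ∧ t ≤ y} from
          ⟨hp, hty⟩)).trans le_sup_right).trans le_sup_left
    · right
      rw [hv]
      cases b
      · exact (inf_le_left.trans inf_le_left).trans (sInf_le (show t ∈
          {t : II | ((t, false) : L3) ∈ S ∧ y ≤ t} from ⟨hp, hyt⟩))
      · exact (inf_le_left.trans inf_le_right).trans (sInf_le (show t ∈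
          {t : II | ((t, true) : L3) ∈ S ∧ y ≤ t} from ⟨hp, hyt⟩))
  · intro b
    by_cases hxys : x ≤ y
    · left
      rw [hu, if_pos hxys]
      exact le_sup_right
    · right
      rw [hv, if_pos (le_of_not_ge hxys)]
      exact inf_le_right

lemma tail (hS : IsCompleteSublattice S) (x : II)
    (hxF : ((x, false) : L3) ∉ S) (hxT : ((x, true) : L3) ∉ S) :
    ∃ S' : Set L3, IsCompleteSublattice S' ∧ S' ≠ Set.univ ∧ S ⊆ S' ∧
      ∀ b : Bool, ((x, b) : L3) ∈ S' := by
  by_cases hy : ∃ y : II, ((y, false) : L3) ∉ S ∧ ((y, true) : L3) ∉ S ∧ y ≠ x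
  · obtain ⟨y, h1, h2, h3⟩ := hy
    exact wall hS y h1 h2 x (Ne.symm h3)
  · exfalso
    push_neg at hy
    refine no_single_gap hS x hxF hxT fun y hyx => ?_
    by_contra hcon
    push_neg at hcon
    exact hyx (hy y hcon.1 hcon.2)

lemma extend_false (hS : IsCompleteSublattice S) (hSne : S ≠ Set.univ)
    (x : II) (hx : x ≠ ⊤) :
    ∃ S' : Set L3, IsCompleteSublattice S' ∧ S' ≠ Set.univ ∧ S ⊆ S' ∧
      ((x, false) : L3) ∈ S' := by
  by_cases hxS : ((x, false) : L3) ∈ S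
  · exact ⟨S, hS, hSne, subset_rfl, hxS⟩
  have hsupA : ((sSup {t : II | ((t, false) : L3) ∈ S}, false) : L3) ∈ S :=
    supF_mem hS fun t ht => ht
  by_cases hA : sSup {t : II | ((t, false) : L3) ∈ S} = ⊤
  · have htopF : (((⊤ : II), false) : L3) ∈ S := hA ▸ hsupA
    have hxT : ((x, true) : L3) ∉ S := fun h => hxS (pair_down hS htopF h le_top)
    obtain ⟨S', h1, h2, h3, h4⟩ := tail hS x hxS hxT
    exact ⟨S', h1, h2, h3, h4 false⟩
  · have hcne : sSup {t : II | ((t, false) : L3) ∈ S} ⊔ x ≠ ⊤ :=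
      ne_of_lt (sup_lt_iff.2 ⟨lt_top_iff_ne_top.2 hA, lt_top_iff_ne_top.2 hx⟩)
    refine ⟨_, Qcs (sSup {t : II | ((t, false) : L3) ∈ S} ⊔ x), Qne hcne, ?_,
      Or.inr le_sup_right⟩
    rintro ⟨t, b⟩ hp
    cases b
    · exact Or.inr ((le_sSup (show t ∈ {t : II | ((t, false) : L3) ∈ S} from hp)).trans
        le_sup_left)
    · exact Or.inl rfl

lemma extend_true (hS : IsCompleteSublattice S) (hSne : S ≠ Set.univ)
    (x : II) (hx : x ≠ ⊥) :
    ∃ S' : Set L3, IsCompleteSublattice S' ∧ S' ≠ Set.univ ∧ S ⊆ S' ∧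
      ((x, true) : L3) ∈ S' := by
  by_cases hxS : ((x, true) : L3) ∈ S
  · exact ⟨S, hS, hSne, subset_rfl, hxS⟩
  have hinfA : ((sInf {t : II | ((t, true) : L3) ∈ S}, true) : L3) ∈ S :=
    infT_mem hS fun t ht => ht
  by_cases hA : sInf {t : II | ((t, true) : L3) ∈ S} = ⊥
  · have hbotT : (((⊥ : II), true) : L3) ∈ S := hA ▸ hinfA
    have hxF : ((x, false) : L3) ∉ S := fun h => hxS (pair_up hS h hbotT bot_le)
    obtain ⟨S', h1, h2, h3, h4⟩ := tail hS x hxF hxS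
    exact ⟨S', h1, h2, h3, h4 true⟩
  · have hcne : sInf {t : II | ((t, true) : L3) ∈ S} ⊓ x ≠ ⊥ :=
      ne_of_gt (lt_inf_iff.2 ⟨bot_lt_iff_ne_bot.2 hA, bot_lt_iff_ne_bot.2 hx⟩)
    refine ⟨_, Rcs (sInf {t : II | ((t, true) : L3) ∈ S} ⊓ x), Rne hcne, ?_,
      Or.inr inf_le_right⟩
    rintro ⟨t, b⟩ hp
    cases b
    · exact Or.inl rfl
    · exact Or.inr (inf_le_left.trans (sInf_le (show t ∈
        {t : II | ((t, true) : L3) ∈ S} from hp)))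


/- ### non-generators and generators -/

lemma nongen_false (x : II) (hx : x ≠ ⊤) : IsLatNonGenerator ((x, false) : L3) := by
  intro X hX
  by_contra hne
  obtain ⟨S', hCS, hS'ne, hsub, hmem⟩ := extend_false (latGen_isCS X) hne x hx
  have hsub2 : latGen (X ∪ {((x, false) : L3)}) ⊆ S' :=
    latGen_subset hCS (Set.union_subset ((subset_latGen X).trans hsub)
      (by intro p hp; rw [Set.mem_singleton_iff] at hp; rw [hp]; exact hmem))
  rw [hX] at hsub2
  exact hS'ne (Set.eq_univ_of_univ_subset hsub2)

lemma nongen_true (x : II) (hx : x ≠ ⊥) : IsLatNonGenerator ((x, true) : L3) := by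
  intro X hX
  by_contra hne
  obtain ⟨S', hCS, hS'ne, hsub, hmem⟩ := extend_true (latGen_isCS X) hne x hx
  have hsub2 : latGen (X ∪ {((x, true) : L3)}) ⊆ S' :=
    latGen_subset hCS (Set.union_subset ((subset_latGen X).trans hsub)
      (by intro p hp; rw [Set.mem_singleton_iff] at hp; rw [hp]; exact hmem))
  rw [hX] at hsub2
  exact hS'ne (Set.eq_univ_of_univ_subset hsub2)

lemma bot_ne_top_II : (⊥ : II) ≠ ⊤ := by
  intro h
  have h1 : (⟨1, by norm_num⟩ : II) ≤ ⊤ := le_top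
  have h0 : (⊥ : II) ≤ ⟨0, by norm_num⟩ := bot_le
  rw [h] at h0
  have := h1.trans h0
  norm_num [Subtype.mk_le_mk] at this

lemma gen_top_false : ¬ IsLatNonGenerator (((⊤ : II), false) : L3) := by
  intro h
  have h1 : latGen ({p : L3 | p.2 = true} ∪ {(((⊤ : II), false) : L3)}) = Set.univ := by
    apply Set.eq_univ_of_univ_subset
    rintro ⟨t, b⟩ -
    cases b
    · -- (t, false) = sInf {(t,true), (⊤,false)}
      have hmem := (latGen_isCS ({p : L3 | p.2 = true} ∪ {(((⊤ : II), false) : L3)})).1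
        {((t, true) : L3), ((⊤ : II), false)} ?_
      · rw [sInf_pair] at hmem
        have heq : ((t, true) : L3) ⊓ ((⊤ : II), false) = (t, false) := by
          show ((t ⊓ ⊤, true ⊓ false) : L3) = (t, false)
          rw [inf_top_eq]
          rfl
        rwa [heq] at hmem
      · rintro p (rfl | rfl)
        · exact subset_latGen _ (Or.inl rfl)
        · exact subset_latGen _ (Or.inr rfl)
    · exact subset_latGen _ (Or.inl rfl)
  have h2 := h _ h1
  have hS1 : IsCompleteSublattice {p : L3 | p.2 = true ∨ p.1 = ⊥} := by
    constructor
    · intro Y hY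
      by_cases hall : ∀ p ∈ Y, p.2 = true
      · left
        have hle : ((⊥, true) : L3) ≤ sInf Y := by
          apply le_sInf
          intro p hp
          exact Prod.le_def.2 ⟨bot_le, by rw [hall p hp]⟩
        exact bool_eq_true_of_true_le (Prod.le_def.1 hle).2
      · right
        push_neg at hall
        obtain ⟨p, hp, hp2⟩ := hall
        have hpb : p.1 = ⊥ := (hY hp).resolve_left hp2
        exact le_bot_iff.1 (hpb ▸ (Prod.le_def.1 (sInf_le hp)).1)
    · intro Y hY
      by_cases hex : ∃ p ∈ Y, p.2 = true
      · left
        obtain ⟨p, hp, hp2⟩ := hex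
        have := (Prod.le_def.1 (le_sSup hp)).2
        rw [hp2] at this
        exact bool_eq_true_of_true_le this
      · right
        have : sSup Y ≤ ((⊥, false) : L3) := by
          apply sSup_le
          intro p hp
          have hp2 : p.2 = false := bool_eq_false_of_ne_true fun hh => hex ⟨p, hp, hh⟩
          have hpb : p.1 = ⊥ := (hY hp).resolve_left (by rw [hp2]; decide)
          exact Prod.le_def.2 ⟨le_of_eq hpb, le_of_eq hp2⟩
        exact le_bot_iff.1 (Prod.le_def.1 this).1
  have hmem : (((⊤ : II), false) : L3) ∈ {p : L3 | p.2 = true ∨ p.1 = ⊥} := by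
    have := latGen_subset (X := {p : L3 | p.2 = true}) hS1 (by intro p hp; exact Or.inl hp)
    rw [h2] at this
    exact this (Set.mem_univ _)
  rcases hmem with hh | hh
  · exact absurd hh (by decide)
  · exact bot_ne_top_II hh.symm

/- ### the two extreme points as limits -/

lemma sSup_almost_top : sSup {p : L3 | p.2 = false ∧ p.1 ≠ ⊤} = (((⊤ : II), false) : L3) := by
  apply le_antisymm
  · apply sSup_le
    rintro ⟨t, b⟩ ⟨hb, ht⟩
    exact Prod.le_def.2 ⟨le_top, le_of_eq hb⟩
  · refine Prod.le_def.2 ⟨?_, bot_le⟩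
    by_contra hcon
    have hlt : (sSup {p : L3 | p.2 = false ∧ p.1 ≠ ⊤}).1 < ⊤ :=
      lt_top_iff_ne_top.2 fun hh => hcon (le_of_eq hh.symm)
    obtain ⟨t, h1, h2⟩ := exists_between hlt
    have : ((t, false) : L3) ∈ {p : L3 | p.2 = false ∧ p.1 ≠ ⊤} := ⟨rfl, ne_of_lt h2⟩
    exact absurd (Prod.le_def.1 (le_sSup this)).1 (not_le.2 h1)

lemma sInf_almost_bot : sInf {p : L3 | p.2 = true ∧ p.1 ≠ ⊥} = (((⊥ : II), true) : L3) := by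
  apply le_antisymm
  · refine Prod.le_def.2 ⟨?_, le_top⟩
    by_contra hcon
    have hlt : (⊥ : II) < (sInf {p : L3 | p.2 = true ∧ p.1 ≠ ⊥}).1 :=
      bot_lt_iff_ne_bot.2 fun hh => hcon (le_of_eq hh)
    obtain ⟨t, h1, h2⟩ := exists_between hlt
    have : ((t, true) : L3) ∈ {p : L3 | p.2 = true ∧ p.1 ≠ ⊥} := ⟨rfl, ne_of_gt h1⟩
    exact absurd (Prod.le_def.1 (sInf_le this)).1 (not_le.2 h2)
  · apply le_sInf
    rintro ⟨t, b⟩ ⟨hb, ht⟩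
    exact Prod.le_def.2 ⟨bot_le, le_of_eq hb.symm⟩

end L3Aux


/-- In `L₃ = [0,1] × Bool`, the set `Γ` of non-generators is not a complete sublattice,
and the complete sublattice generated by `Γ` is all of `L₃`. -/
theorem nonGenerators_L3_not_sublattice :
    ¬ IsCompleteSublattice {a : Set.Icc (0 : ℝ) 1 × Bool | IsLatNonGenerator a} ∧
    latGen {a : Set.Icc (0 : ℝ) 1 × Bool | IsLatNonGenerator a} = Set.univ := by
  have hYΓ : {p : L3Aux.L3 | p.2 = false ∧ p.1 ≠ ⊤} ⊆
      {a : Set.Icc (0 : ℝ) 1 × Bool | IsLatNonGenerator a} := by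
    rintro ⟨t, b⟩ ⟨hb, ht⟩
    dsimp only at hb ht
    subst hb
    exact L3Aux.nongen_false t ht
  have hTΓ : {p : L3Aux.L3 | p.2 = true ∧ p.1 ≠ ⊥} ⊆
      {a : Set.Icc (0 : ℝ) 1 × Bool | IsLatNonGenerator a} := by
    rintro ⟨t, b⟩ ⟨hb, ht⟩
    dsimp only at hb ht
    subst hb
    exact L3Aux.nongen_true t ht
  constructor
  · intro hΓ
    have hmem := hΓ.2 _ hYΓ
    rw [L3Aux.sSup_almost_top] at hmem
    exact L3Aux.gen_top_false hmem
  · apply Set.eq_univ_of_univ_subset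
    rintro ⟨t, b⟩ -
    cases b
    · by_cases ht : t = ⊤
      · subst ht
        rw [← L3Aux.sSup_almost_top]
        exact (L3Aux.latGen_isCS _).2 _ fun p hp => L3Aux.subset_latGen _ (hYΓ hp)
      · exact L3Aux.subset_latGen _ (L3Aux.nongen_false t ht)
    · by_cases ht : t = ⊥
      · subst ht
        rw [← L3Aux.sInf_almost_bot]
        exact (L3Aux.latGen_isCS _).1 _ fun p hp => L3Aux.subset_latGen _ (hTΓ hp)
      · exact L3Aux.subset_latGen _ (L3Aux.nongen_true t ht)
end

section
/- Let K = WithTop (ℕ ×ₗ ℕ), let L₂ = K × Bool with the componentwise lattice order, and define the single infinitary operation f : (ℕ → L₂) → L₂ by f(x) = ⨆_{i ∈ ℕ} (x(2i) ⊓ x(2i+1)). Call a subset S ⊆ L₂ f-closed if f(x) ∈ S for every sequence x : ℕ → S, and for X ⊆ L₂ let ⟨X⟩_f be the intersection of all f-closed subsets containing X. Define a ∈ L₂ to be an f-non-generator if ⟨X ∪ {a}⟩_f = L₂ implies ⟨X⟩_f = L₂ for all X ⊆ L₂. Then the set of f-non-generators of L₂ is not f-closed, i.e. it is not a substructure of the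 algebra (L₂, f). -/
/-- The single infinitary operation `f(x) = ⨆ i, x(2i) ⊓ x(2i+1)` on
`L₂ = (WithTop (ℕ ×ₗ ℕ)) × Bool`. -/
noncomputable def fOp (x : ℕ → WithTop (ℕ ×ₗ ℕ) × Bool) : WithTop (ℕ ×ₗ ℕ) × Bool :=
  ⨆ i : ℕ, (x (2 * i) ⊓ x (2 * i + 1))

/-- A subset is `f`-closed if it is closed under the operation `fOp`. -/
def FClosed (S : Set (WithTop (ℕ ×ₗ ℕ) × Bool)) : Prop :=
  ∀ x : ℕ → WithTop (ℕ ×ₗ ℕ) × Bool, (∀ i, x i ∈ S) → fOp x ∈ S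

/-- The substructure generated by `X` in the algebra `(L₂, f)`. -/
def fGen (X : Set (WithTop (ℕ ×ₗ ℕ) × Bool)) : Set (WithTop (ℕ ×ₗ ℕ) × Bool) :=
  ⋂₀ {S : Set (WithTop (ℕ ×ₗ ℕ) × Bool) | FClosed S ∧ X ⊆ S}

/-- `a` is an `f`-non-generator. -/
def IsFNonGenerator (a : WithTop (ℕ ×ₗ ℕ) × Bool) : Prop :=
  ∀ X : Set (WithTop (ℕ ×ₗ ℕ) × Bool),
    fGen (X ∪ {a}) = Set.univ → fGen X = Set.univ

abbrev K : Type := WithTop (ℕ ×ₗ ℕ)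
abbrev L2 : Type := K × Bool

lemma fGen_fclosed (X : Set L2) : FClosed (fGen X) := by
  intro x hx S hS
  exact hS.1 x fun i => hx i S hS

lemma subset_fGen (X : Set L2) : X ⊆ fGen X := fun c hc S hS => hS.2 hc

lemma fGen_subset {S X : Set L2} (h : FClosed S) (hX : X ⊆ S) : fGen X ⊆ S :=
  fun c hc => hc S ⟨h, hX⟩

lemma fOp_pair (a b : L2) : fOp (fun i => if i % 2 = 0 then a else b) = a ⊓ b := by
  have : ∀ i : ℕ, (if (2*i) % 2 = 0 then a else b) ⊓ (if (2*i+1) % 2 = 0 then a else b) = a ⊓ b := by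
    intro i
    have h1 : (2*i) % 2 = 0 := by omega
    have h2 : (2*i+1) % 2 = 1 := by omega
    simp [h1, h2]
  simp only [fOp, this, iSup_const]

lemma fOp_halves (y : ℕ → L2) : fOp (fun i => y (i / 2)) = ⨆ i, y i := by
  have : ∀ i : ℕ, y ((2*i)/2) ⊓ y ((2*i+1)/2) = y i := by
    intro i
    have h1 : (2*i)/2 = i := by omega
    have h2 : (2*i+1)/2 = i := by omega
    rw [h1, h2, inf_idem]
  simp only [fOp, this]

lemma fclosed_inf {S : Set L2} (hS : FClosed S) {a b : L2} (ha : a ∈ S) (hb : b ∈ S) :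
    a ⊓ b ∈ S := by
  have := hS (fun i => if i % 2 = 0 then a else b) (fun i => by split <;> assumption)
  rwa [fOp_pair] at this

lemma fclosed_iSup {S : Set L2} (hS : FClosed S) {y : ℕ → L2} (hy : ∀ i, y i ∈ S) :
    (⨆ i, y i) ∈ S := by
  have := hS (fun i => y (i / 2)) (fun i => hy _)
  rwa [fOp_halves] at this

-- order helpers
lemma le_pred_of_lt {n m : ℕ} {u : K} (h : u < (↑(toLex (n, m+1)) : K)) :
    u ≤ (↑(toLex (n, m)) : K) := by
  induction u using WithTop.recTopCoe with
  | top => exact absurd h (by simp)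
  | coe v =>
    rw [WithTop.coe_lt_coe] at h
    rw [WithTop.coe_le_coe]
    have h' : toLex ((ofLex v).1, (ofLex v).2) < toLex (n, m+1) := h
    have := Prod.Lex.lt_iff.1 h'
    show toLex ((ofLex v).1, (ofLex v).2) ≤ toLex (n, m)
    rw [Prod.Lex.le_iff]
    dsimp at this ⊢
    omega

lemma ge_succ_of_forall {n : ℕ} {u : K} (h : ∀ m : ℕ, (↑(toLex (n, m+1)) : K) ≤ u) :
    (↑(toLex (n+1, 0)) : K) ≤ u := by
  induction u using WithTop.recTopCoe with
  | top => exact le_top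
  | coe v =>
    rw [WithTop.coe_le_coe]
    have h0 : toLex (n, 0+1) ≤ toLex ((ofLex v).1, (ofLex v).2) := WithTop.coe_le_coe.1 (h 0)
    have hb : toLex (n, (ofLex v).2+1) ≤ toLex ((ofLex v).1, (ofLex v).2) :=
      WithTop.coe_le_coe.1 (h (ofLex v).2)
    rw [Prod.Lex.le_iff] at h0 hb
    show toLex (n+1, 0) ≤ toLex ((ofLex v).1, (ofLex v).2)
    rw [Prod.Lex.le_iff]
    dsimp at h0 hb ⊢
    omega

lemma eq_top_of_forall {u : K} (h : ∀ i : ℕ, (↑(toLex (i+1, 0)) : K) ≤ u) : u = ⊤ := by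
  induction u using WithTop.recTopCoe with
  | top => rfl
  | coe v =>
    exfalso
    have ha : toLex ((ofLex v).1+1, 0) ≤ toLex ((ofLex v).1, (ofLex v).2) :=
      WithTop.coe_le_coe.1 (h (ofLex v).1)
    rw [Prod.Lex.le_iff] at ha
    dsimp at ha
    omega

lemma succ_lt_lim (n m : ℕ) : (↑(toLex (n, m+1)) : K) < (↑(toLex (n+1, 0)) : K) := by
  rw [WithTop.coe_lt_coe]
  exact Prod.Lex.lt_iff.2 (Or.inl (by dsimp; omega))

lemma fOp_eq (x : ℕ → L2) : fOp x = ⨆ i : ℕ, (x (2 * i) ⊓ x (2 * i + 1)) := rfl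

lemma bool_eq_true_of_le {b : Bool} (h : true ≤ b) : b = true := by
  cases b
  · exact absurd h (by decide)
  · rfl

lemma trues_fclosed : FClosed {c : L2 | c.2 = true} := by
  intro x hx
  have h01 : x 0 ⊓ x 1 ≤ fOp x := le_iSup (fun i => x (2*i) ⊓ x (2*i+1)) 0
  have h2 : (x 0 ⊓ x 1).2 = true := by
    rw [Prod.inf_def]
    dsimp
    rw [hx 0, hx 1]
    rfl
  exact bool_eq_true_of_le (h2 ▸ h01.2)

lemma Sk_fclosed (n m : ℕ) : FClosed {c : L2 | c.1 ≠ (↑(toLex (n, m+1)) : K)} := by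
  intro x hx
  intro hcontra
  rw [fOp_eq] at hcontra
  have hterm : ∀ i : ℕ, (x (2*i) ⊓ x (2*i+1)).1 ≠ (↑(toLex (n, m+1)) : K) := by
    intro i
    rw [Prod.inf_def]
    rcases le_total (x (2*i)).1 (x (2*i+1)).1 with h | h
    · rw [inf_eq_left.2 h]; exact hx (2*i)
    · rw [inf_eq_right.2 h]; exact hx (2*i+1)
  have hle : ∀ i : ℕ, x (2*i) ⊓ x (2*i+1) ≤ ⨆ j : ℕ, (x (2 * j) ⊓ x (2 * j + 1)) :=
    fun i => le_iSup (fun j => x (2 * j) ⊓ x (2 * j + 1)) i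
  have hbound : ∀ i : ℕ, x (2*i) ⊓ x (2*i+1) ≤
      (((↑(toLex (n, m)) : K), (⨆ j : ℕ, (x (2 * j) ⊓ x (2 * j + 1))).2) : L2) := by
    intro i
    refine ⟨le_pred_of_lt (lt_of_le_of_ne ?_ (hterm i)), (hle i).2⟩
    exact hcontra ▸ (hle i).1
  have h1 := (iSup_le hbound).1
  rw [hcontra] at h1
  rw [WithTop.coe_le_coe, Prod.Lex.le_iff] at h1
  dsimp at h1
  omega

lemma Vs_fclosed (s : K) : FClosed {c : L2 | c.2 = true ∨ c.1 ≤ s} := by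
  intro x hx
  have hterm : ∀ i : ℕ, (x (2*i) ⊓ x (2*i+1)).2 = true ∨ (x (2*i) ⊓ x (2*i+1)).1 ≤ s := by
    intro i
    rcases hx (2*i) with h | h
    · rcases hx (2*i+1) with h' | h'
      · left; rw [Prod.inf_def]; dsimp; rw [h, h']; rfl
      · right; rw [Prod.inf_def]; exact le_trans inf_le_right h'
    · right; rw [Prod.inf_def]; exact le_trans inf_le_left h
  by_cases hT : ∃ i, (x (2*i) ⊓ x (2*i+1)).2 = true
  · obtain ⟨i, hi⟩ := hT
    left
    have : x (2*i) ⊓ x (2*i+1) ≤ fOp x :=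
      fOp_eq x ▸ le_iSup (fun i => x (2*i) ⊓ x (2*i+1)) i
    exact bool_eq_true_of_le (hi ▸ this.2)
  · push_neg at hT
    right
    have hall : ∀ i : ℕ, x (2*i) ⊓ x (2*i+1) ≤ (s, false) := by
      intro i
      rcases hterm i with h | h
      · exact absurd h (hT i)
      · refine ⟨h, ?_⟩
        cases hb : (x (2*i) ⊓ x (2*i+1)).2
        · exact le_refl _
        · exact absurd hb (hT i)
    have : fOp x ≤ ((s, false) : L2) := by rw [fOp_eq]; exact iSup_le hall
    exact this.1

lemma coe_ne (p q : ℕ × ℕ) (h : p ≠ q) : (↑(toLex p) : K) ≠ ↑(toLex q) := by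
  intro hc
  exact h (toLex.injective (WithTop.coe_injective hc))

lemma nonGen (n : ℕ) : IsFNonGenerator ((↑(toLex (n+1, 0)) : K), false) := by
  intro X h
  set a : L2 := ((↑(toLex (n+1, 0)) : K), false) with ha
  -- Step 1: X contains an element at each successor level (n, m+1)
  have h1 : ∀ m : ℕ, ∃ c ∈ X, c.1 = (↑(toLex (n, m+1)) : K) := by
    intro m
    by_contra hc
    push_neg at hc
    have hsub : X ∪ {a} ⊆ {c : L2 | c.1 ≠ (↑(toLex (n, m+1)) : K)} := by
      rintro c (hcX | hcA)
      · exact hc c hcX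
      · rw [Set.mem_singleton_iff] at hcA
        rw [hcA]
        exact coe_ne _ _ (by simp)
    have := fGen_subset (Sk_fclosed n m) hsub
    rw [h] at this
    exact this (Set.mem_univ ((↑(toLex (n, m+1)) : K), false)) rfl
  -- Step 2: X contains a false element at level ≥ (n+1, 0)
  have h2 : ∃ d ∈ X, d.2 = false ∧ (↑(toLex (n+1, 0)) : K) ≤ d.1 := by
    by_contra hc
    push_neg at hc
    have hsub : X ∪ {a} ⊆ {c : L2 | c.2 = true ∨ c.1 ≤ (↑(toLex (n+1, 0)) : K)} := by
      rintro c (hcX | hcA)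
      · cases hb : c.2 with
        | true => exact Or.inl hb
        | false => exact Or.inr (le_of_lt (hc c hcX hb))
      · rw [Set.mem_singleton_iff] at hcA
        rw [hcA]
        exact Or.inr (le_refl _)
    have := fGen_subset (Vs_fclosed _) hsub
    rw [h] at this
    rcases this (Set.mem_univ ((⊤ : K), false)) with h' | h'
    · exact Bool.false_ne_true h'
    · exact absurd (top_le_iff.1 h') (by simp)
  choose c hcX hc1 using h1
  obtain ⟨d, hdX, hd2, hd1⟩ := h2
  -- Step 3: elements ((n, m+1), false) are in fGen X
  have he : ∀ m : ℕ, c m ⊓ d = (((↑(toLex (n, m+1)) : K), false) : L2) := by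
    intro m
    rw [Prod.inf_def]
    have hfst : (c m).1 ⊓ d.1 = (↑(toLex (n, m+1)) : K) := by
      rw [hc1 m]
      exact inf_eq_left.2 (le_trans (le_of_lt (succ_lt_lim n m)) hd1)
    have hsnd : (c m).2 ⊓ d.2 = false := by
      rw [hd2]
      exact inf_eq_right.2 (Bool.false_le _)
    rw [hfst, hsnd]
  have hem : ∀ m : ℕ, (((↑(toLex (n, m+1)) : K), false) : L2) ∈ fGen X := fun m =>
    he m ▸ fclosed_inf (fGen_fclosed X) (subset_fGen X (hcX m)) (subset_fGen X hdX)
  -- Step 4: a is the sup of these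
  have hsup : (⨆ m : ℕ, (((↑(toLex (n, m+1)) : K), false) : L2)) = a := by
    apply le_antisymm
    · apply iSup_le
      intro m
      exact ⟨le_of_lt (succ_lt_lim n m), le_refl _⟩
    · refine ⟨?_, Bool.false_le _⟩
      exact ge_succ_of_forall fun m =>
        (le_iSup (fun m => (((↑(toLex (n, m+1)) : K), false) : L2)) m).1
  have haX : a ∈ fGen X := hsup ▸ fclosed_iSup (fGen_fclosed X) hem
  have hXa : X ∪ {a} ⊆ fGen X :=
    Set.union_subset (subset_fGen X) (Set.singleton_subset_iff.2 haX)
  have := fGen_subset (fGen_fclosed X) hXa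
  rw [h] at this
  exact Set.univ_subset_iff.1 this

lemma topFalse_generator : ¬ IsFNonGenerator (((⊤ : K), false) : L2) := by
  intro h
  have hgen : fGen ({c : L2 | c.2 = true} ∪ {(((⊤ : K), false) : L2)}) = Set.univ := by
    apply Set.eq_univ_of_forall
    intro z S hS
    obtain ⟨hSc, hsub⟩ := hS
    cases hz : z.2 with
    | true => exact hsub (Or.inl hz)
    | false =>
      have h1 : (((⊤ : K), false) : L2) ∈ S := hsub (Or.inr rfl)
      have h2 : ((z.1, true) : L2) ∈ S := hsub (Or.inl rfl)
      have : (((⊤ : K), false) : L2) ⊓ ((z.1, true) : L2) = z := by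
        rw [Prod.inf_def]
        dsimp
        rw [top_inf_eq]
        exact Prod.ext rfl (by rw [hz]; rfl)
      exact this ▸ fclosed_inf hSc h1 h2
  have := h _ hgen
  have hsub := fGen_subset trues_fclosed (le_refl {c : L2 | c.2 = true})
  rw [this] at hsub
  exact Bool.false_ne_true (hsub (Set.mem_univ (((⊤ : K), false) : L2)))


/-- There is an algebra with a single operation of countably infinite arity whose set of
non-generators fails to be a substructure: the set of `f`-non-generators of `(L₂, f)`
is not `f`-closed. -/
theorem fNonGenerators_not_fClosed :
    ¬ FClosed {a : WithTop (ℕ ×ₗ ℕ) × Bool | IsFNonGenerator a} := by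
  intro h
  have hmem := h (fun i => (((↑(toLex (i/2 + 1, 0)) : K), false) : L2))
    (fun i => by exact nonGen (i/2))
  have heq : fOp (fun i => (((↑(toLex (i/2 + 1, 0)) : K), false) : L2)) = (((⊤ : K), false) : L2) := by
    have h1 : fOp (fun i => (((↑(toLex (i/2 + 1, 0)) : K), false) : L2)) =
        ⨆ i : ℕ, (((↑(toLex (i + 1, 0)) : K), false) : L2) :=
      fOp_halves (fun i => (((↑(toLex (i + 1, 0)) : K), false) : L2))
    rw [h1]
    apply le_antisymm
    · exact iSup_le fun i => ⟨le_top, le_refl _⟩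
    · refine ⟨?_, Bool.false_le _⟩
      have := eq_top_of_forall (u := (⨆ i : ℕ, (((↑(toLex (i + 1, 0)) : K), false) : L2)).1)
        (fun i => (le_iSup (fun i => (((↑(toLex (i + 1, 0)) : K), false) : L2)) i).1)
      rw [this]
  rw [heq] at hmem
  exact topFalse_generator hmem
end
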